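/- arXiv:1910.05037 — 7 statements merged into one kernel-verified Lean document; each statement's English description precedes it below -/
import Mathlib

section
/- Let (Z_i, τ_i)_{i∈ℕ} be an i.i.d. sequence of pairs of real random variables on a probability space (Ω, 𝓕, P) with τ_0 > 0 almost surely, E[τ_0²] < ∞ and E[Z_0²] < ∞. Set r := E[Z_0]/E[τ_0] and σ² := E[(Z_0 − r·τ_0)²]/(E[τ_0])². For each n let τ̄_n := n^{−1} Σ_{i=0}^{n−1} τ_i, f̄_n := (Σ_{i=0}^{n−1} Z_i)/(Σ_{i=0}^{n−1} τ_i), and define the estimator σ̂_n² := ( Σ_{i=0}^{n−1} (Z_i − f̄_n τ_i)² ) / ( n · τ̄_n² ). Then σ̂_n² → σ² almost surely as n → ∞. -/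
/-!
Expanding the square, `σ̂²ₙ = (m(Z²) - 2 f̄ₙ m(Zτ) + f̄ₙ² m(τ²)) / m(τ)²` where `m(·)` is the sample
mean over the first `n` pairs and `f̄ₙ = m(Z) / m(τ)`. By the strong law of large numbers, applied
to the five functions `Z², Zτ, τ², Z, τ` of the i.i.d. pairs, every sample mean converges almost
surely to the corresponding expectation, and `E[τ] > 0`; by continuity `σ̂²ₙ` converges to
`(E[Z²] - 2r E[Zτ] + r² E[τ²]) / E[τ]² = E[(Z - rτ)²] / E[τ]²`.
-/

open MeasureTheory ProbabilityTheory Filter Topology Finset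

noncomputable def sampleMean (x : ℕ → ℝ) (n : ℕ) : ℝ := (∑ i ∈ range n, x i) / n

theorem sum_sub_mul_sq {ι : Type*} (s : Finset ι) (z t : ι → ℝ) (c : ℝ) :
    ∑ i ∈ s, (z i - c * t i) ^ 2
      = ∑ i ∈ s, z i ^ 2 - 2 * c * ∑ i ∈ s, z i * t i + c ^ 2 * ∑ i ∈ s, t i ^ 2 := by
  rw [mul_sum, mul_sum, ← sum_sub_distrib, ← sum_add_distrib]
  exact sum_congr rfl fun i _ => by ring

/-- Holds for every `n`, including the degenerate cases `n = 0` and `∑ τ = 0`, where both sides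
are `0` by the convention `x / 0 = 0`. -/
theorem variance_estimator_eq_sampleMean (z t : ℕ → ℝ) (n : ℕ) :
    (∑ i ∈ range n, (z i - (∑ i ∈ range n, z i) / (∑ i ∈ range n, t i) * t i) ^ 2)
        / (n * ((n : ℝ)⁻¹ * ∑ i ∈ range n, t i) ^ 2)
      = (sampleMean (fun i => z i ^ 2) n
          - 2 * (sampleMean z n / sampleMean t n) * sampleMean (fun i => z i * t i) n
          + (sampleMean z n / sampleMean t n) ^ 2 * sampleMean (fun i => t i ^ 2) n)
        / sampleMean t n ^ 2 := by
  rcases eq_or_ne (n : ℝ) 0 with hn | hn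
  · simp [sampleMean, hn]
  have hratio : sampleMean z n / sampleMean t n
      = (∑ i ∈ range n, z i) / (∑ i ∈ range n, t i) := by
    simp only [sampleMean, div_div_div_cancel_right₀ hn]
  rw [hratio, sum_sub_mul_sq]
  rcases eq_or_ne (∑ i ∈ range n, t i) 0 with ht | ht
  · simp [sampleMean, ht]
  · simp only [sampleMean]
    field_simp

theorem tendsto_variance_estimator {z t : ℕ → ℝ} {A B C μZ μτ : ℝ} (hμτ : μτ ≠ 0)
    (hA : Tendsto (sampleMean fun i => z i ^ 2) atTop (𝓝 A))
    (hB : Tendsto (sampleMean fun i => z i * t i) atTop (𝓝 B))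
    (hC : Tendsto (sampleMean fun i => t i ^ 2) atTop (𝓝 C))
    (hz : Tendsto (sampleMean z) atTop (𝓝 μZ))
    (ht : Tendsto (sampleMean t) atTop (𝓝 μτ)) :
    Tendsto (fun n : ℕ =>
        (∑ i ∈ range n, (z i - (∑ i ∈ range n, z i) / (∑ i ∈ range n, t i) * t i) ^ 2)
          / (n * ((n : ℝ)⁻¹ * ∑ i ∈ range n, t i) ^ 2))
      atTop (𝓝 ((A - 2 * (μZ / μτ) * B + (μZ / μτ) ^ 2 * C) / μτ ^ 2)) := by
  simp_rw [variance_estimator_eq_sampleMean]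
  have hratio := hz.div ht hμτ
  exact ((hA.sub ((hratio.const_mul 2).mul hB)).add ((hratio.pow 2).mul hC)).div
    (ht.pow 2) (pow_ne_zero 2 hμτ)

theorem strong_law_ae_comp {Ω E : Type*} [MeasurableSpace Ω] [MeasurableSpace E]
    {μ : Measure Ω} (X : ℕ → Ω → E) (hindep : Pairwise fun i j => X i ⟂ᵢ[μ] X j)
    (hident : ∀ i, IdentDistrib (X i) (X 0) μ μ) {g : E → ℝ} (hg : Measurable g)
    (hint : Integrable (fun ω => g (X 0 ω)) μ) :
    ∀ᵐ ω ∂μ, Tendsto (sampleMean fun i => g (X i ω)) atTop (𝓝 (∫ ω, g (X 0 ω) ∂μ)) :=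
  strong_law_ae_real (fun i ω => g (X i ω)) hint
    (fun _ _ hij => (hindep hij).comp hg hg) (fun i => (hident i).comp hg)

theorem integral_pos_of_ae_pos {α : Type*} [MeasurableSpace α] {μ : Measure α} [NeZero μ]
    {f : α → ℝ} (hf : ∀ᵐ x ∂μ, 0 < f x) (hfi : Integrable f μ) : 0 < ∫ x, f x ∂μ := by
  rw [integral_pos_iff_support_of_nonneg_ae (hf.mono fun _ h => h.le) hfi, pos_iff_ne_zero]
  intro hsupp
  have hnull : ∀ᵐ x ∂μ, f x = 0 := by
    simpa [Function.support] using measure_eq_zero_iff_ae_notMem.1 hsupp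
  have hfalse : ∀ᵐ _ ∂μ, False := by
    filter_upwards [hf, hnull] with x hpos hzero
    exact hpos.ne' hzero
  exact NeZero.ne μ (ae_eq_bot.1 (eventually_false_iff_eq_bot.1 hfalse))

theorem integral_sub_mul_sq {α : Type*} [MeasurableSpace α] {μ : Measure α} [IsFiniteMeasure μ]
    {f g : α → ℝ} (hf : MemLp f 2 μ) (hg : MemLp g 2 μ) (c : ℝ) :
    ∫ x, (f x - c * g x) ^ 2 ∂μ
      = ∫ x, f x ^ 2 ∂μ - 2 * c * ∫ x, f x * g x ∂μ + c ^ 2 * ∫ x, g x ^ 2 ∂μ := by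
  have hexpand : (fun x => (f x - c * g x) ^ 2)
      = fun x => f x ^ 2 - 2 * c * (f x * g x) + c ^ 2 * g x ^ 2 := by
    funext x; ring
  have hfg : Integrable (fun x => 2 * c * (f x * g x)) μ :=
    (hf.integrable_mul hg).const_mul (2 * c)
  have hg2 : Integrable (fun x => c ^ 2 * g x ^ 2) μ := hg.integrable_sq.const_mul (c ^ 2)
  have hdiff : Integrable (fun x => f x ^ 2 - 2 * c * (f x * g x)) μ := hf.integrable_sq.sub hfg
  rw [hexpand, integral_add hdiff hg2, integral_sub hf.integrable_sq hfg,
    integral_const_mul, integral_const_mul]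

theorem restore_variance_estimator_consistent_general
    {Ω : Type*} [MeasurableSpace Ω] (P : Measure Ω) [IsProbabilityMeasure P]
    (Z τ : ℕ → Ω → ℝ)
    (hindep : iIndepFun (fun i ω => (Z i ω, τ i ω)) P)
    (hident : ∀ i, IdentDistrib (fun ω => (Z i ω, τ i ω)) (fun ω => (Z 0 ω, τ 0 ω)) P P)
    (hτpos : ∀ᵐ ω ∂P, 0 < τ 0 ω)
    (hτ2 : Integrable (fun ω => (τ 0 ω) ^ 2) P)
    (hZ2 : Integrable (fun ω => (Z 0 ω) ^ 2) P)
    (r : ℝ) (hr : r = (∫ ω, Z 0 ω ∂P) / (∫ ω, τ 0 ω ∂P))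
    (σ2 : ℝ) (hσ2 : σ2 = (∫ ω, (Z 0 ω - r * τ 0 ω) ^ 2 ∂P) / (∫ ω, τ 0 ω ∂P) ^ 2)
    (τbar : ℕ → Ω → ℝ) (hτbar : ∀ n ω, τbar n ω = (n : ℝ)⁻¹ * ∑ i ∈ Finset.range n, τ i ω)
    (fbar : ℕ → Ω → ℝ)
    (hfbar : ∀ n ω, fbar n ω =
      (∑ i ∈ Finset.range n, Z i ω) / (∑ i ∈ Finset.range n, τ i ω))
    (σhat2 : ℕ → Ω → ℝ)
    (hσhat2 : ∀ n ω, σhat2 n ω =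
      (∑ i ∈ Finset.range n, (Z i ω - fbar n ω * τ i ω) ^ 2) / ((n : ℝ) * (τbar n ω) ^ 2)) :
    ∀ᵐ ω ∂P, Tendsto (fun n : ℕ => σhat2 n ω) atTop (𝓝 σ2) := by
  have hpair : AEMeasurable (fun ω => (Z 0 ω, τ 0 ω)) P := (hident 0).aemeasurable_snd
  have hZ : MemLp (Z 0) 2 P := (memLp_two_iff_integrable_sq hpair.fst.aestronglyMeasurable).2 hZ2
  have hτ : MemLp (τ 0) 2 P := (memLp_two_iff_integrable_sq hpair.snd.aestronglyMeasurable).2 hτ2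
  have hμτ : 0 < ∫ ω, τ 0 ω ∂P := integral_pos_of_ae_pos hτpos (hτ.integrable one_le_two)
  have slln {g : ℝ × ℝ → ℝ} (hg : Measurable g)
      (hint : Integrable (fun ω => g (Z 0 ω, τ 0 ω)) P) :=
    strong_law_ae_comp _ (fun _ _ hij => hindep.indepFun hij) hident hg hint
  filter_upwards [slln (measurable_fst.pow_const 2) hZ2,
    slln (measurable_fst.mul measurable_snd) (hZ.integrable_mul hτ),
    slln (measurable_snd.pow_const 2) hτ2, slln measurable_fst (hZ.integrable one_le_two),
    slln measurable_snd (hτ.integrable one_le_two)] with ω hA hB hC hz ht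
  simp_rw [hσhat2, hfbar, hτbar]
  rw [hσ2, integral_sub_mul_sq hZ hτ, hr]
  exact tendsto_variance_estimator hμτ.ne' hA hB hC hz ht

/-- **Consistency of the asymptotic-variance estimator.**
For an i.i.d. sequence of pairs `(Z i, τ i)` with `τ 0 > 0` a.s. and square-integrable
components, with `r = E[Z 0]/E[τ 0]` and `σ² = E[(Z 0 - r τ 0)²]/(E[τ 0])²`, the estimator
`σ̂²_n = (∑_{i<n} (Z i - f̄_n τ i)²)/(n τ̄_n²)` (where `τ̄_n = n⁻¹ ∑_{i<n} τ i` and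
`f̄_n = (∑_{i<n} Z i)/(∑_{i<n} τ i)`) converges to `σ²` almost surely. -/
theorem restore_variance_estimator_consistent
    {Ω : Type*} [MeasurableSpace Ω] (P : Measure Ω) [IsProbabilityMeasure P]
    (Z τ : ℕ → Ω → ℝ)
    (hmeas : ∀ i, Measurable (fun ω => (Z i ω, τ i ω)))
    (hindep : iIndepFun (fun i ω => (Z i ω, τ i ω)) P)
    (hident : ∀ i, IdentDistrib (fun ω => (Z i ω, τ i ω)) (fun ω => (Z 0 ω, τ 0 ω)) P P)
    (hτpos : ∀ᵐ ω ∂P, 0 < τ 0 ω)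
    (hτ2 : Integrable (fun ω => (τ 0 ω) ^ 2) P)
    (hZ2 : Integrable (fun ω => (Z 0 ω) ^ 2) P)
    (r : ℝ) (hr : r = (∫ ω, Z 0 ω ∂P) / (∫ ω, τ 0 ω ∂P))
    (σ2 : ℝ) (hσ2 : σ2 = (∫ ω, (Z 0 ω - r * τ 0 ω) ^ 2 ∂P) / (∫ ω, τ 0 ω ∂P) ^ 2)
    (τbar : ℕ → Ω → ℝ) (hτbar : ∀ n ω, τbar n ω = (n : ℝ)⁻¹ * ∑ i ∈ Finset.range n, τ i ω)
    (fbar : ℕ → Ω → ℝ)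
    (hfbar : ∀ n ω, fbar n ω =
      (∑ i ∈ Finset.range n, Z i ω) / (∑ i ∈ Finset.range n, τ i ω))
    (σhat2 : ℕ → Ω → ℝ)
    (hσhat2 : ∀ n ω, σhat2 n ω =
      (∑ i ∈ Finset.range n, (Z i ω - fbar n ω * τ i ω) ^ 2) / ((n : ℝ) * (τbar n ω) ^ 2)) :
    ∀ᵐ ω ∂P, Tendsto (fun n : ℕ => σhat2 n ω) atTop (𝓝 σ2) :=
  restore_variance_estimator_consistent_general P Z τ hindep hident hτpos hτ2 hZ2 r hr σ2 hσ2 τbar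
    hτbar fbar hfbar σhat2 hσhat2
end

section
/- Let (E, 𝓔) be a measurable space with a σ-finite measure m. Let π : E → ℝ be a measurable function with π(x) > 0 for all x and ∫ π dm = 1, let κ̃ : E → ℝ be measurable, and fix κ̲ ≥ 0. Suppose C* := ∫ max(0, κ̲ − κ̃(x)) π(x) dm(x) is finite and strictly positive, and define the minimal regeneration density μ*(x) := (C*)^{−1} max(0, κ̲ − κ̃(x)) π(x). Let μ : E → ℝ be a nonnegative measurable function with ∫ μ dm = 1 and let C > 0 be a constant such that κ̃(x) + C·μ(x)/π(x) ≥ κ̲ for all x ∈ E. Then: (a) C·μ(x) ≥ C*·μ*(x) for every x ∈ E; (b) for every measurable set B ⊆ E, ∫_B μ dm ≥ (C*/C) ∫_B μ* dm, so μ minorizes μ* with constant ε = C*/C; and (c) C ≥ C*. -/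
/-!
The rate constraint `κ̃ + C μ / π ≥ κ̲` says exactly that `C μ` dominates the deficit
`max 0 (κ̲ - κ̃) π = C* μ*` pointwise; integrating this domination over `B`, resp. over all of `E`
(where `∫ μ = 1`), gives the minorization and `C* ≤ C`.
-/

open MeasureTheory

theorem max_zero_sub_mul_le {a b p q : ℝ} (hp : 0 < p) (hq : 0 ≤ q) (h : a ≤ b + q / p) :
    max 0 (a - b) * p ≤ q := by
  rcases le_total (a - b) 0 with hab | hab
  · simpa [max_eq_left hab] using hq
  · rw [max_eq_right hab, ← le_div_iff₀ hp]
    linarith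

theorem div_mul_setIntegral_le_of_mul_le_mul {E : Type*} [MeasurableSpace E] {m : Measure E}
    {f g : E → ℝ} {a c : ℝ} (hc : 0 < c) (hf : Integrable f m) (hg : Integrable g m)
    (h : ∀ x, a * f x ≤ c * g x) (B : Set E) :
    a / c * ∫ x in B, f x ∂m ≤ ∫ x in B, g x ∂m := by
  rw [div_mul_eq_mul_div, div_le_iff₀' hc, ← integral_const_mul, ← integral_const_mul]
  exact setIntegral_mono ((hf.const_mul a).integrableOn) ((hg.const_mul c).integrableOn) h

theorem minimal_regeneration_distribution_general
    {E : Type*} [MeasurableSpace E] (m : Measure E)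
    (π κt μ : E → ℝ)
    (hπpos : ∀ x, 0 < π x)
    (κlow : ℝ)
    (Cstar : ℝ) (hCstar : Cstar = ∫ x, max 0 (κlow - κt x) * π x ∂m)
    (hCstarInt : Integrable (fun x => max 0 (κlow - κt x) * π x) m)
    (hCstarpos : 0 < Cstar)
    (μstar : E → ℝ) (hμstar : ∀ x, μstar x = Cstar⁻¹ * (max 0 (κlow - κt x) * π x))
    (hμnonneg : ∀ x, 0 ≤ μ x) (hμint : ∫ x, μ x ∂m = 1)
    (hμIntegrable : Integrable μ m)
    (C : ℝ) (hC : 0 < C)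
    (hκ : ∀ x, κlow ≤ κt x + C * μ x / π x) :
    (∀ x, Cstar * μstar x ≤ C * μ x) ∧
    (∀ B : Set E, MeasurableSet B →
      (Cstar / C) * ∫ x in B, μstar x ∂m ≤ ∫ x in B, μ x ∂m) ∧
    Cstar ≤ C := by
  have deficit_le : ∀ x, max 0 (κlow - κt x) * π x ≤ C * μ x := fun x =>
    max_zero_sub_mul_le (hπpos x) (mul_nonneg hC.le (hμnonneg x)) (hκ x)
  have μstar_eq : μstar = fun x => Cstar⁻¹ * (max 0 (κlow - κt x) * π x) := funext hμstar
  have Cstar_mul_μstar : ∀ x, Cstar * μstar x = max 0 (κlow - κt x) * π x := fun x => by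
    rw [hμstar, mul_inv_cancel_left₀ hCstarpos.ne']
  have pointwise : ∀ x, Cstar * μstar x ≤ C * μ x := fun x =>
    (Cstar_mul_μstar x).trans_le (deficit_le x)
  refine ⟨pointwise, fun B _ => ?_, ?_⟩
  · exact div_mul_setIntegral_le_of_mul_le_mul hC (μstar_eq ▸ hCstarInt.const_mul _)
      hμIntegrable pointwise B
  · calc Cstar ≤ ∫ x, C * μ x ∂m :=
          hCstar ▸ integral_mono hCstarInt (hμIntegrable.const_mul C) deficit_le
      _ = C := by rw [integral_const_mul, hμint, mul_one]

/-- **Minimal regeneration distribution (Proposition 5.1).**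
Given a positive target density `π` (w.r.t. a σ-finite measure `m`), a partial regeneration
rate `κ̃`, and a lower bound `κ̲ ≥ 0`, let `C* = ∫ max 0 (κ̲ - κ̃) π dm ∈ (0,∞)` and
`μ*(x) = (C*)⁻¹ max 0 (κ̲ - κ̃ x) π x`.  If `μ ≥ 0` is a normalized density and `C > 0` is
such that `κ̃ x + C μ x / π x ≥ κ̲` for all `x`, then `C μ ≥ C* μ*` pointwise, `μ` minorizes
`μ*` with constant `ε = C*/C` in the sense that `∫_B μ ≥ (C*/C) ∫_B μ*` for all measurable
`B`, and `C ≥ C*`. -/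
theorem minimal_regeneration_distribution
    {E : Type*} [MeasurableSpace E] (m : Measure E) [SigmaFinite m]
    (π κt μ : E → ℝ)
    (hπmeas : Measurable π) (hκtmeas : Measurable κt) (hμmeas : Measurable μ)
    (hπpos : ∀ x, 0 < π x) (hπint : ∫ x, π x ∂m = 1)
    (κlow : ℝ) (hκlow : 0 ≤ κlow)
    (Cstar : ℝ) (hCstar : Cstar = ∫ x, max 0 (κlow - κt x) * π x ∂m)
    (hCstarInt : Integrable (fun x => max 0 (κlow - κt x) * π x) m)
    (hCstarpos : 0 < Cstar)
    (μstar : E → ℝ) (hμstar : ∀ x, μstar x = Cstar⁻¹ * (max 0 (κlow - κt x) * π x))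
    (hμnonneg : ∀ x, 0 ≤ μ x) (hμint : ∫ x, μ x ∂m = 1)
    (hμIntegrable : Integrable μ m)
    (C : ℝ) (hC : 0 < C)
    (hκ : ∀ x, κlow ≤ κt x + C * μ x / π x) :
    (∀ x, Cstar * μstar x ≤ C * μ x) ∧
    (∀ B : Set E, MeasurableSet B →
      (Cstar / C) * ∫ x in B, μstar x ∂m ≤ ∫ x in B, μ x ∂m) ∧
    Cstar ≤ C :=
  minimal_regeneration_distribution_general m π κt μ hπpos κlow Cstar hCstar hCstarInt hCstarpos
    μstar hμstar hμnonneg hμint hμIntegrable C hC hκ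
end

section
/- Let Φ denote the standard normal cumulative distribution function, Φ(λ) := ∫_{−∞}^{λ} (2π)^{−1/2} e^{−u²/2} du. Then for all real numbers L > 0 and b > 0, ∫₀^∞ (1 − Φ(L/√t)) · e^{−b t} dt ≤ (1/(2b)) · (1 + 1/(L√(2b))) · exp(−√(2b)·L). -/
open MeasureTheory Real

/-- The standard normal cumulative distribution function
`Φ(λ) = ∫_{-∞}^{λ} (2π)^{-1/2} e^{-u²/2} du`. -/
noncomputable def stdNormalCDF (l : ℝ) : ℝ :=
  ∫ u in Set.Iic l, (2 * Real.pi) ^ (-(1 : ℝ) / 2) * Real.exp (-u ^ 2 / 2)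

open Set ProbabilityTheory

/-!
Writing `1 - Φ(L/√t) = ∫_{u > L/√t} φ(u) du`, with `φ` the standard normal density, and
exchanging the order of integration turns the left side into `(1/b) ∫₀^∞ φ(u) e^{-bL²/u²} du`.
Completing the square, `u²/2 + bL²/u² = (u/√2 - √b L/u)² + √(2b) L`, and the Cauchy–Schlömilch
substitution `v = a u - c/u`, together with the symmetry `u ↦ c/(a u)`, gives
`∫₀^∞ e^{-(a u - c/u)²} du = √π/(2a)`. So the left side equals `e^{-√(2b) L}/(2b)` exactly.
-/

lemma stdNormalCDF_eq_integral_gaussianPDFReal (l : ℝ) :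
    stdNormalCDF l = ∫ u in Iic l, gaussianPDFReal 0 1 u := by
  refine setIntegral_congr_fun measurableSet_Iic fun u _ => ?_
  rw [gaussianPDFReal, ← sqrt_inv, sqrt_eq_rpow, ← rpow_neg_one, ← rpow_mul (by positivity)]
  norm_num

lemma one_sub_stdNormalCDF (l : ℝ) :
    1 - stdNormalCDF l = ∫ u in Ioi l, gaussianPDFReal 0 1 u := by
  rw [stdNormalCDF_eq_integral_gaussianPDFReal, ← integral_gaussianPDFReal_eq_one 0 one_ne_zero,
    ← intervalIntegral.integral_Iic_add_Ioi (integrable_gaussianPDFReal 0 1).integrableOn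
      (integrable_gaussianPDFReal 0 1).integrableOn]
  ring

lemma mem_Ioi_div_sqrt_iff {L t u : ℝ} (hL : 0 ≤ L) (ht : 0 < t) :
    u ∈ Ioi (L / √t) ↔ 0 < u ∧ L ^ 2 < t * u ^ 2 := by
  have hsq : t * u ^ 2 = (u * √t) ^ 2 := by rw [mul_pow, sq_sqrt ht.le]; ring
  rw [mem_Ioi, div_lt_iff₀ (sqrt_pos.2 ht), hsq]
  constructor
  · intro h
    exact ⟨pos_of_mul_pos_left (hL.trans_lt h) (sqrt_nonneg t), pow_lt_pow_left₀ h hL two_ne_zero⟩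
  · rintro ⟨hu, h⟩
    exact lt_of_pow_lt_pow_left₀ 2 (by positivity) h

lemma mem_Ioi_div_sq_iff {L t u : ℝ} (hu : 0 < u) :
    t ∈ Ioi (L ^ 2 / u ^ 2) ↔ 0 < t ∧ L ^ 2 < t * u ^ 2 := by
  rw [mem_Ioi, div_lt_iff₀ (by positivity)]
  exact ⟨fun h => ⟨pos_of_mul_pos_left ((sq_nonneg L).trans_lt h) (sq_nonneg u), h⟩, And.right⟩

theorem integral_Ioi_mul_integral_Ioi_div_sqrt {f g : ℝ → ℝ} {L : ℝ} (hL : 0 ≤ L)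
    (hf : IntegrableOn f (Ioi 0)) (hg : IntegrableOn g (Ioi 0)) :
    ∫ t in Ioi 0, g t * ∫ u in Ioi (L / √t), f u =
      ∫ u in Ioi 0, f u * ∫ t in Ioi (L ^ 2 / u ^ 2), g t := by
  set S : Set (ℝ × ℝ) := {z | L ^ 2 < z.1 * z.2 ^ 2}
  have hS : MeasurableSet S := measurableSet_lt measurable_const (by fun_prop)
  set F : ℝ → ℝ → ℝ := fun t u => S.indicator (fun z => g z.1 * f z.2) (t, u)
  have hF : Integrable (Function.uncurry F)
      ((volume.restrict (Ioi 0)).prod (volume.restrict (Ioi 0))) :=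
    (hg.mul_prod hf).indicator hS
  have h_section_t : ∀ t ∈ Ioi (0 : ℝ), ∫ u in Ioi 0, F t u = g t * ∫ u in Ioi (L / √t), f u := by
    intro t ht
    rw [← integral_const_mul]
    change ∫ u in Ioi 0, (Prod.mk t ⁻¹' S).indicator (fun u => g t * f u) u = _
    rw [setIntegral_indicator (measurable_prodMk_left hS)]
    congr 2
    ext u
    exact (mem_Ioi_div_sqrt_iff hL ht).symm
  have h_section_u : ∀ u ∈ Ioi (0 : ℝ),
      ∫ t in Ioi 0, F t u = f u * ∫ t in Ioi (L ^ 2 / u ^ 2), g t := by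
    intro u hu
    rw [mul_comm, ← integral_mul_const]
    change ∫ t in Ioi 0, ((fun t => (t, u)) ⁻¹' S).indicator (fun t => g t * f u) t = _
    rw [setIntegral_indicator (measurable_prodMk_right hS)]
    congr 2
    ext t
    exact (mem_Ioi_div_sq_iff hu).symm
  rw [← setIntegral_congr_fun measurableSet_Ioi h_section_t,
    ← setIntegral_congr_fun measurableSet_Ioi h_section_u]
  exact integral_integral_swap hF

section CauchySchlomilch

variable {E : Type*} [NormedAddCommGroup E] [NormedSpace ℝ E] {a c : ℝ}

lemma hasDerivAt_mul_sub_div (a c : ℝ) {u : ℝ} (hu : u ≠ 0) :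
    HasDerivAt (fun u => a * u - c / u) (a + c / u ^ 2) u := by
  simpa only [div_eq_mul_inv, mul_one, mul_neg, sub_neg_eq_add] using
    ((hasDerivAt_id' u).const_mul a).fun_sub ((hasDerivAt_inv hu).const_mul c)

lemma strictMonoOn_mul_sub_div (ha : 0 < a) (hc : 0 ≤ c) :
    StrictMonoOn (fun u => a * u - c / u) (Ioi 0) := by
  intro x hx y hy hxy
  have := div_le_div_of_nonneg_left hc hx hxy.le
  have := mul_lt_mul_of_pos_left hxy ha
  dsimp only
  linarith

lemma image_mul_sub_div_Ioi (ha : 0 < a) (hc : 0 < c) :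
    (fun u => a * u - c / u) '' Ioi 0 = univ := by
  refine eq_univ_of_forall fun v => ?_
  -- the positive root of `a u ^ 2 - v u - c`
  set D := √(v ^ 2 + 4 * a * c)
  have hD : D ^ 2 = v ^ 2 + 4 * a * c := sq_sqrt (by positivity)
  have hvD : 0 < v + D := by
    have : |v| < D := by
      rw [← sqrt_sq_eq_abs]; exact sqrt_lt_sqrt (sq_nonneg v) (by linarith [mul_pos ha hc])
    linarith [neg_abs_le v]
  refine ⟨(v + D) / (2 * a), div_pos hvD (by positivity), ?_⟩
  field_simp
  linear_combination hD

theorem integral_Ioi_smul_comp_mul_sub_div (ha : 0 < a) (hc : 0 < c) (f : ℝ → E) :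
    ∫ u in Ioi 0, (a + c / u ^ 2) • f (a * u - c / u) = ∫ v, f v := by
  symm
  rw [← setIntegral_univ, ← image_mul_sub_div_Ioi ha hc,
    integral_image_eq_integral_abs_deriv_smul measurableSet_Ioi
      (fun u hu => (hasDerivAt_mul_sub_div a c (ne_of_gt hu)).hasDerivWithinAt)
      (strictMonoOn_mul_sub_div ha hc.le).injOn]
  refine setIntegral_congr_fun measurableSet_Ioi fun u _ => ?_
  rw [abs_of_pos (add_pos_of_pos_of_nonneg ha (by positivity))]

theorem integrableOn_Ioi_smul_comp_mul_sub_div_iff (ha : 0 < a) (hc : 0 < c) (f : ℝ → E) :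
    IntegrableOn (fun u => (a + c / u ^ 2) • f (a * u - c / u)) (Ioi 0) ↔ Integrable f := by
  rw [← integrableOn_univ, ← image_mul_sub_div_Ioi ha hc,
    integrableOn_image_iff_integrableOn_abs_deriv_smul measurableSet_Ioi
      (fun u hu => (hasDerivAt_mul_sub_div a c (ne_of_gt hu)).hasDerivWithinAt)
      (strictMonoOn_mul_sub_div ha hc.le).injOn]
  refine integrableOn_congr_fun (fun u _ => ?_) measurableSet_Ioi
  rw [abs_of_pos (add_pos_of_pos_of_nonneg ha (by positivity))]

theorem integral_Ioi_smul_comp_div {k : ℝ} (hk : 0 < k) (f : ℝ → E) :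
    ∫ u in Ioi 0, (k / u ^ 2) • f (k / u) = ∫ u in Ioi 0, f u := by
  have hderiv : ∀ u ∈ Ioi (0 : ℝ), HasDerivWithinAt (fun u => k / u) (-(k / u ^ 2)) (Ioi 0) u := by
    intro u hu
    simpa [div_eq_mul_inv] using ((hasDerivAt_inv (ne_of_gt hu)).const_mul k).hasDerivWithinAt
  have himage : (fun u => k / u) '' Ioi 0 = Ioi 0 := by
    ext v
    refine ⟨?_, fun hv => ⟨k / v, div_pos hk hv, div_div_cancel₀ hk.ne'⟩⟩
    rintro ⟨u, hu, rfl⟩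
    exact div_pos hk hu
  have hinj : InjOn (fun u => k / u) (Ioi 0) := fun x _ y _ h =>
    inv_injective (mul_left_cancel₀ hk.ne' (by simpa [div_eq_mul_inv] using h))
  conv_rhs => rw [← himage]
  rw [integral_image_eq_integral_abs_deriv_smul measurableSet_Ioi hderiv hinj]
  refine setIntegral_congr_fun measurableSet_Ioi fun u hu => ?_
  rw [abs_neg, abs_of_pos (div_pos hk (pow_pos hu 2))]

theorem integral_exp_neg_sq_mul_sub_div (ha : 0 < a) (hc : 0 < c) :
    ∫ u in Ioi 0, exp (-(a * u - c / u) ^ 2) = √π / (2 * a) := by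
  set h : ℝ → ℝ := fun u => exp (-(a * u - c / u) ^ 2)
  have h_inv : ∀ u ∈ Ioi (0 : ℝ), h (c / a / u) = h u := by
    intro u hu
    have : (0:ℝ) < u := hu
    dsimp only [h]
    congr 1
    field_simp
    ring
  have h_reflect : ∫ u in Ioi 0, c / u ^ 2 * h u = a * ∫ u in Ioi 0, h u := by
    rw [← integral_Ioi_smul_comp_div (div_pos hc ha) h, ← integral_const_mul]
    refine setIntegral_congr_fun measurableSet_Ioi fun u hu => ?_
    rw [smul_eq_mul, h_inv u hu]
    field_simp
  have h_gauss : Integrable fun v : ℝ => exp (-v ^ 2) := by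
    simpa using integrable_exp_neg_mul_sq one_pos
  have h_weighted : IntegrableOn (fun u => (a + c / u ^ 2) * h u) (Ioi 0) :=
    (integrableOn_Ioi_smul_comp_mul_sub_div_iff ha hc _).2 h_gauss
  have h_int : IntegrableOn h (Ioi 0) := by
    refine (h_weighted.div_const a).mono' (by fun_prop) ?_
    filter_upwards [ae_restrict_mem measurableSet_Ioi] with u hu
    have : (0:ℝ) < u := hu
    rw [norm_of_nonneg (exp_pos _).le, le_div_iff₀ ha, mul_comm]
    exact mul_le_mul_of_nonneg_right (le_add_of_nonneg_right (by positivity)) (exp_pos _).le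
  have h_total : ∫ u in Ioi 0, (a + c / u ^ 2) * h u = √π := by
    have h_gauss_val : ∫ v : ℝ, exp (-v ^ 2) = √π := by simpa using integral_gaussian 1
    rw [← h_gauss_val]
    exact integral_Ioi_smul_comp_mul_sub_div ha hc fun v => exp (-v ^ 2)
  have h_split : ∫ u in Ioi 0, c / u ^ 2 * h u = √π - a * ∫ u in Ioi 0, h u := by
    rw [← h_total, ← integral_const_mul, ← integral_sub h_weighted (h_int.const_mul a)]
    congr 1 with u
    ring
  rw [eq_div_iff (by positivity)]
  linarith

end CauchySchlomilch

theorem integral_Ioi_gaussianPDFReal_mul_exp_neg_div_sq {β : ℝ} (hβ : 0 < β) :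
    ∫ u in Ioi 0, gaussianPDFReal 0 1 u * exp (-β / u ^ 2) = exp (-√(2 * β)) / 2 := by
  have hs2 : √2 ^ 2 = 2 := sq_sqrt zero_le_two
  have hsβ : √β ^ 2 = β := sq_sqrt hβ.le
  -- complete the square: `u² / 2 + β / u² = (u / √2 - √β / u)² + √(2β)`
  have h_pt : ∀ u ∈ Ioi (0 : ℝ), gaussianPDFReal 0 1 u * exp (-β / u ^ 2) =
      ((√2 * √π)⁻¹ * exp (-(√2 * √β))) * exp (-(√2 / 2 * u - √β / u) ^ 2) := by
    intro u hu
    have hu0 : u ≠ 0 := ne_of_gt hu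
    simp only [gaussianPDFReal, NNReal.coe_one, mul_one, sub_zero]
    rw [sqrt_mul zero_le_two, mul_assoc, ← exp_add, mul_assoc, ← exp_add]
    congr 2
    field_simp
    linear_combination u ^ 4 * hs2 + 4 * hsβ
  rw [setIntegral_congr_fun measurableSet_Ioi h_pt, integral_const_mul,
    integral_exp_neg_sq_mul_sub_div (by positivity) (sqrt_pos.2 hβ), sqrt_mul zero_le_two]
  field_simp
  exact hs2.symm

theorem integral_Ioi_one_sub_stdNormalCDF_mul_exp {L b : ℝ} (hL : 0 < L) (hb : 0 < b) :
    ∫ t in Ioi 0, (1 - stdNormalCDF (L / √t)) * exp (-b * t) = exp (-√(2 * b) * L) / (2 * b) := by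
  calc ∫ t in Ioi 0, (1 - stdNormalCDF (L / √t)) * exp (-b * t)
      = ∫ t in Ioi 0, exp (-b * t) * ∫ u in Ioi (L / √t), gaussianPDFReal 0 1 u := by
        simp_rw [one_sub_stdNormalCDF, mul_comm]
    _ = ∫ u in Ioi 0, gaussianPDFReal 0 1 u * ∫ t in Ioi (L ^ 2 / u ^ 2), exp (-b * t) :=
        integral_Ioi_mul_integral_Ioi_div_sqrt hL.le
          (integrable_gaussianPDFReal 0 1).integrableOn (exp_neg_integrableOn_Ioi 0 hb)
    _ = (∫ u in Ioi 0, gaussianPDFReal 0 1 u * exp (-(b * L ^ 2) / u ^ 2)) / b := by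
        rw [← integral_div]
        congr 1 with u
        rw [integral_exp_mul_Ioi (neg_lt_zero.2 hb), neg_mul, ← mul_div_assoc b, ← neg_div (u ^ 2)]
        ring
    _ = exp (-√(2 * b) * L) / (2 * b) := by
        rw [integral_Ioi_gaussianPDFReal_mul_exp_neg_div_sq (by positivity),
          ← mul_assoc, sqrt_mul (by positivity), sqrt_sq hL.le, neg_mul]
        ring

/-- **The analytic core of the truncation-error bound of Section 5.2.**
For `L, b > 0`,
`∫₀^∞ (1 - Φ(L/√t)) e^{-bt} dt ≤ (1/(2b)) (1 + 1/(L√(2b))) exp (-√(2b) L)`. -/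
theorem integral_gaussian_tail_bound
    (L b : ℝ) (hL : 0 < L) (hb : 0 < b) :
    ∫ t in Set.Ioi (0 : ℝ), (1 - stdNormalCDF (L / Real.sqrt t)) * Real.exp (-b * t)
      ≤ (1 / (2 * b)) * (1 + 1 / (L * Real.sqrt (2 * b))) *
        Real.exp (-(Real.sqrt (2 * b)) * L) := by
  rw [integral_Ioi_one_sub_stdNormalCDF_mul_exp hL hb, div_eq_mul_one_div, mul_comm]
  gcongr
  exact le_mul_of_one_le_right (by positivity) (le_add_of_nonneg_right (by positivity))
end

section
/- Let E be a nonempty finite set. Let Q : E × E → ℝ be a transition rate matrix, i.e. Q(x,y) ≥ 0 for all x ≠ y and Σ_y Q(x,y) = 0 for all x. Let π : E → ℝ be a probability vector with π(x) > 0 for all x, let μ : E → ℝ be a probability vector, and let C ∈ ℝ be such that κ(x) := ( (πQ)(x) + C μ(x) ) / π(x) ≥ 0 for all x ∈ E, where (πQ)(x) := Σ_y π(y) Q(y,x). Define the matrix L : E × E → ℝ by L(x,y) := Q(x,y) + κ(x)·(μ(y) − 1{x = y}). Then Σ_x π(x) L(x,y) = 0 for every y ∈ E, and consequently π · exp(tL)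 = π (as row vectors, with exp the matrix exponential) for every t ≥ 0. -/
/-!
Write the generator as `L = Q + κ μᵀ - diag κ`. Then
`πL = πQ + (π·κ) μ - πκ`, and the choice of `κ` makes `πκ = πQ + C μ` entrywise; summing this
over the states kills `πQ` (the rows of `Q` sum to zero) and leaves `π·κ = C`, so `πL = 0`.
Every term of index `n ≥ 1` of the exponential series then vanishes after multiplication by `π`,
whence `π exp(tL) = π`.
-/

open Matrix NormedSpace
open scoped Nat

namespace Matrix

theorem vecMul_pow_succ_eq_zero {m α : Type*} [Fintype m] [DecidableEq m] [Semiring α]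
    {v : m → α} {A : Matrix m m α} (h : v ᵥ* A = 0) (n : ℕ) : v ᵥ* A ^ (n + 1) = 0 := by
  rw [pow_succ', ← vecMul_vecMul, h, zero_vecMul]

theorem vecMul_exp_eq_self_of_vecMul_eq_zero {m 𝔸 : Type*} [Fintype m] [DecidableEq m]
    [NormedRing 𝔸] [NormedAlgebra ℚ 𝔸] [CompleteSpace 𝔸]
    {v : m → 𝔸} {A : Matrix m m 𝔸} (h : v ᵥ* A = 0) : v ᵥ* exp A = v := by
  -- Taken before the operator norm is installed: instance search does not identify the
  -- uniformity induced by that norm with the product uniformity.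
  have hcomplete : CompleteSpace (Matrix m m 𝔸) := inferInstance
  let : NormedRing (Matrix m m 𝔸) := Matrix.linftyOpNormedRing
  let : NormedAlgebra ℚ (Matrix m m 𝔸) := Matrix.linftyOpNormedAlgebra
  have hseries : HasSum (fun n ↦ v ᵥ* ((n !⁻¹ : ℚ) • A ^ n)) (v ᵥ* exp A) :=
    (@exp_series_hasSum_exp' ℚ _ _ _ _ _ _ hcomplete A).map
      ({ toFun := (v ᵥ* ·), map_zero' := vecMul_zero v, map_add' := fun A B ↦ vecMul_add A B v } :
        Matrix m m 𝔸 →+ (m → 𝔸))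
      (continuous_const.matrix_vecMul continuous_id)
  refine hseries.unique (hasSum_single 0 fun n hn ↦ ?_) |>.trans (by simp)
  obtain ⟨k, rfl⟩ := Nat.exists_eq_succ_of_ne_zero hn
  rw [vecMul_smul, vecMul_pow_succ_eq_zero h, smul_zero]

variable {E R : Type*} [Fintype E]

theorem sum_vecMul_eq_zero_of_sum_row_eq_zero [NonUnitalNonAssocSemiring R] {Q : Matrix E E R}
    (hQ : ∀ x, ∑ y, Q x y = 0) (v : E → R) : ∑ x, (v ᵥ* Q) x = 0 := by
  simp only [vecMul, dotProduct]
  rw [Finset.sum_comm]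
  simp [← Finset.mul_sum, hQ]

theorem vecMul_add_vecMulVec_sub_diagonal_eq_zero [CommRing R] [DecidableEq E]
    {Q : Matrix E E R} (hQ : ∀ x, ∑ y, Q x y = 0) {π κ μ : E → R} {C : R} (hμ : ∑ x, μ x = 1)
    (hκ : ∀ x, π x * κ x = (π ᵥ* Q) x + C * μ x) :
    π ᵥ* (Q + vecMulVec κ μ - diagonal κ) = 0 := by
  have hπκ : π ⬝ᵥ κ = C := by
    simp only [dotProduct, hκ, Finset.sum_add_distrib, sum_vecMul_eq_zero_of_sum_row_eq_zero hQ,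
      ← Finset.mul_sum, hμ, zero_add, mul_one]
  ext y
  simp only [vecMul_sub, vecMul_add, vecMul_vecMulVec, vecMul_diagonal, hπκ, Pi.sub_apply,
    Pi.add_apply, Pi.smul_apply, smul_eq_mul, hκ, Pi.zero_apply]
  ring

end Matrix

theorem finite_jump_restore_invariant_general
    {E : Type*} [Fintype E] [DecidableEq E]
    (Q : Matrix E E ℝ)
    (hQrow : ∀ x, ∑ y, Q x y = 0)
    (π μ : E → ℝ)
    (hπpos : ∀ x, 0 < π x)
    (hμsum : ∑ x, μ x = 1)
    (C : ℝ)
    (κ : E → ℝ) (hκ : ∀ x, κ x = ((∑ y, π y * Q y x) + C * μ x) / π x)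
    (L : Matrix E E ℝ)
    (hL : ∀ x y, L x y = Q x y + κ x * (μ y - if x = y then 1 else 0)) :
    (∀ y, ∑ x, π x * L x y = 0) ∧
    (∀ t : ℝ, 0 ≤ t → ∀ y, ∑ x, π x * NormedSpace.exp (t • L) x y = π y) := by
  have hL_eq : L = Q + vecMulVec κ μ - diagonal κ := by
    ext x y
    simp only [hL, Matrix.add_apply, Matrix.sub_apply, vecMulVec_apply, diagonal_apply]
    split_ifs <;> ring
  have hπL : π ᵥ* L = 0 := by
    refine hL_eq ▸ vecMul_add_vecMulVec_sub_diagonal_eq_zero hQrow hμsum (C := C) fun x ↦ ?_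
    rw [hκ x, mul_div_cancel₀ _ (hπpos x).ne']
    rfl
  refine ⟨congrFun hπL, fun t _ y ↦ ?_⟩
  have hπtL : π ᵥ* (t • L) = 0 := by rw [vecMul_smul, hπL, smul_zero]
  exact congrFun (vecMul_exp_eq_self_of_vecMul_eq_zero hπtL) y

/-- **π-invariance of the finite-state jump-process Restore sampler (Theorem 3.8).**
Let `Q` be a transition rate matrix on a finite state space `E`, `π` a positive probability
vector, `μ` a probability vector and `C` a constant such that
`κ x = ((πQ) x + C μ x)/π x ≥ 0` for all `x`.  Let
`L x y = Q x y + κ x (μ y - 1{x = y})` be the generator of the Restore process.  Then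
`π L = 0` (as a row vector), and consequently `π · exp(tL) = π` for all `t ≥ 0`. -/
theorem finite_jump_restore_invariant
    {E : Type*} [Fintype E] [DecidableEq E] [Nonempty E]
    (Q : Matrix E E ℝ)
    (hQoff : ∀ x y, x ≠ y → 0 ≤ Q x y)
    (hQrow : ∀ x, ∑ y, Q x y = 0)
    (π μ : E → ℝ)
    (hπpos : ∀ x, 0 < π x) (hπsum : ∑ x, π x = 1)
    (hμnonneg : ∀ x, 0 ≤ μ x) (hμsum : ∑ x, μ x = 1)
    (C : ℝ)
    (κ : E → ℝ) (hκ : ∀ x, κ x = ((∑ y, π y * Q y x) + C * μ x) / π x)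
    (hκnonneg : ∀ x, 0 ≤ κ x)
    (L : Matrix E E ℝ)
    (hL : ∀ x y, L x y = Q x y + κ x * (μ y - if x = y then 1 else 0)) :
    (∀ y, ∑ x, π x * L x y = 0) ∧
    (∀ t : ℝ, 0 ≤ t → ∀ y, ∑ x, π x * NormedSpace.exp (t • L) x y = π y) :=
  finite_jump_restore_invariant_general Q hQrow π μ hπpos hμsum C κ hκ L hL
end

section
/- Let E be a nonempty finite set, Q : E × E → ℝ a transition rate matrix (Q(x,y) ≥ 0 for x ≠ y, Σ_y Q(x,y) = 0 for all x), μ : E → ℝ a probability vector, and κ : E → ℝ a function with κ(x) ≥ κ̲ for all x, for some constant κ̲ > 0. Define L(x,y) := Q(x,y) + κ(x)·(μ(y) − 1{x = y}). Then there exists a probability vector π on E such that π · exp(tL) = π for all t ≥ 0, and for every probability vector ν on E and every t ≥ 0, Σ_y | (ν · exp(tL))(y) − π(y) | ≤ 2 e^{−t κ̲}. -/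
/-!
Write `L = A + κ̲ 𝟙μ` with `A = L - κ̲ 𝟙μ`; the off-diagonal entries of `A` are still
nonnegative. The rank-one part (regeneration from `μ` at the constant rate `κ̲`, which forgets the
current state) annihilates vectors of total mass zero, so on them `exp (tL)` acts as `exp (tA)`,
a nonnegative matrix with row sums `e^{-tκ̲}`. Hence `exp (tL)` contracts mass-zero vectors in `ℓ¹`
by `e^{-tκ̲}`. An invariant vector exists since `L 𝟙 = 0` forces `det L = 0`; the contraction
shows that its mass is nonzero, and comparing the normalised vector with an evolved point mass as
`t → ∞` shows that it is nonnegative. The bound `2 e^{-tκ̲}` is the contraction applied to `ν - π`.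
-/

open Matrix NormedSpace Filter
open scoped Nat Topology

namespace Matrix

variable {ι : Type*} [Fintype ι] [DecidableEq ι]

theorem summable_expSeries (M : Matrix ι ι ℝ) :
    Summable fun n : ℕ => (n !⁻¹ : ℝ) • M ^ n := by
  let _ : NormedRing (Matrix ι ι ℝ) := Matrix.linftyOpNormedRing
  let _ : NormedAlgebra ℝ (Matrix ι ι ℝ) := Matrix.linftyOpNormedAlgebra
  exact expSeries_summable' M

theorem exp_apply_eq_tsum (M : Matrix ι ι ℝ) (i j : ι) :
    exp M i j = ∑' n : ℕ, (n !⁻¹ : ℝ) * (M ^ n) i j := by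
  rw [congrFun (exp_eq_tsum ℝ) M]
  exact (Pi.hasSum.1 (Pi.hasSum.1 (summable_expSeries M).hasSum i) j).tsum_eq.symm

theorem vecMul_exp_eq_tsum (w : ι → ℝ) (M : Matrix ι ι ℝ) :
    w ᵥ* exp M = ∑' n : ℕ, (n !⁻¹ : ℝ) • (w ᵥ* M ^ n) := by
  let vecMulHom : Matrix ι ι ℝ →+ (ι → ℝ) :=
    { toFun := (w ᵥ* ·), map_zero' := vecMul_zero w, map_add' := fun _ _ => vecMul_add _ _ w }
  have := (summable_expSeries M).hasSum.map vecMulHom (continuous_const.matrix_vecMul continuous_id)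
  rw [congrFun (exp_eq_tsum ℝ) M]
  simpa [vecMulHom, vecMul_smul] using this.tsum_eq.symm

theorem vecMul_exp_of_vecMul_eq_smul {w : ι → ℝ} {M : Matrix ι ι ℝ} {r : ℝ}
    (h : w ᵥ* M = r • w) : w ᵥ* exp M = Real.exp r • w := by
  have hpow (n : ℕ) : w ᵥ* M ^ n = r ^ n • w := by
    induction n with
    | zero => simp
    | succ n ih => rw [pow_succ, ← vecMul_vecMul, ih, smul_vecMul, h, smul_smul, pow_succ]
  simp_rw [vecMul_exp_eq_tsum, hpow, smul_smul]
  have hr : Summable fun n : ℕ => (n !⁻¹ : ℝ) * r ^ n := expSeries_summable' (𝕂 := ℝ) r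
  rw [hr.tsum_smul_const, Real.exp_eq_exp_ℝ, exp_eq_tsum ℝ]
  rfl

theorem exp_mulVec_of_mulVec_eq_smul {v : ι → ℝ} {M : Matrix ι ι ℝ} {r : ℝ}
    (h : M *ᵥ v = r • v) : exp M *ᵥ v = Real.exp r • v := by
  rw [← vecMul_transpose, ← exp_transpose]
  exact vecMul_exp_of_vecMul_eq_smul (by rwa [vecMul_transpose])

theorem exp_add_smul_one (M : Matrix ι ι ℝ) (r : ℝ) :
    exp (M + r • 1) = Real.exp r • exp M := by
  rw [exp_add_of_commute _ _ ((Commute.one_right M).smul_right r), smul_one_eq_diagonal,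
    exp_diagonal, Pi.exp_def, ← Real.exp_eq_exp_ℝ, ← smul_one_eq_diagonal, mul_smul_comm, mul_one]

theorem exp_apply_nonneg_of_nonneg {M : Matrix ι ι ℝ} (h : ∀ i j, 0 ≤ M i j) (i j : ι) :
    0 ≤ exp M i j := by
  rw [exp_apply_eq_tsum]
  exact tsum_nonneg fun n => mul_nonneg (by positivity) (pow_apply_nonneg h n i j)

theorem exp_apply_nonneg {M : Matrix ι ι ℝ} (h : ∀ i j, i ≠ j → 0 ≤ M i j) (i j : ι) :
    0 ≤ exp M i j := by
  set c := ∑ k, |M k k|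
  have hshift : ∀ k l, 0 ≤ (M + c • 1) k l := by
    intro k l
    rcases eq_or_ne k l with rfl | hkl
    · have := Finset.single_le_sum (fun k _ => abs_nonneg (M k k)) (Finset.mem_univ k)
      simp only [add_apply, smul_apply, one_apply_eq, smul_eq_mul, mul_one]
      linarith [neg_abs_le (M k k)]
    · simpa [one_apply_ne hkl] using h k l hkl
  have hM : M = (M + c • 1) + (-c) • 1 := by rw [neg_smul]; abel
  rw [hM, exp_add_smul_one, smul_apply, smul_eq_mul]
  exact mul_nonneg (Real.exp_nonneg _) (exp_apply_nonneg_of_nonneg hshift i j)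

theorem vecMul_exp_smul_eq_self {w : ι → ℝ} {L : Matrix ι ι ℝ} (h : w ᵥ* L = 0) (t : ℝ) :
    w ᵥ* exp (t • L) = w := by
  rw [vecMul_exp_of_vecMul_eq_smul (r := 0) (by rw [vecMul_smul, h, smul_zero, zero_smul]),
    Real.exp_zero, one_smul]

theorem vecMul_exp_eq_of_forall_vecMul_pow_eq {w : ι → ℝ} {M N : Matrix ι ι ℝ}
    (h : ∀ n : ℕ, w ᵥ* M ^ n = w ᵥ* N ^ n) : w ᵥ* exp M = w ᵥ* exp N := by
  simp_rw [vecMul_exp_eq_tsum, h]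

theorem vecMul_pow_eq_of_forall_mem {R : Type*} [Semiring R]
    {M N : Matrix ι ι R} {S : Set (ι → R)} (hS : ∀ v ∈ S, v ᵥ* M ∈ S)
    (hMN : ∀ v ∈ S, v ᵥ* M = v ᵥ* N) (n : ℕ) : ∀ v ∈ S, v ᵥ* M ^ n = v ᵥ* N ^ n := by
  induction n with
  | zero => simp
  | succ n ih =>
    intro v hv
    rw [pow_succ' M, pow_succ' N, ← vecMul_vecMul, ← vecMul_vecMul, ih _ (hS v hv), hMN v hv]

end Matrix

section

variable {ι : Type*} [Fintype ι]

theorem Matrix.sum_abs_vecMul_le {P : Matrix ι ι ℝ} {c : ℝ} (hP : ∀ i j, 0 ≤ P i j)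
    (hrow : P *ᵥ 1 = c • 1) (w : ι → ℝ) : ∑ j, |(w ᵥ* P) j| ≤ (∑ i, |w i|) * c := by
  have hrow' (i : ι) : ∑ j, P i j = c := by simpa [mulVec, dotProduct] using congrFun hrow i
  calc ∑ j, |(w ᵥ* P) j| ≤ ∑ j, ∑ i, |w i| * P i j := by
        gcongr with j
        refine (Finset.abs_sum_le_sum_abs _ _).trans_eq ?_
        simp [abs_mul, abs_of_nonneg (hP _ j)]
    _ = (∑ i, |w i|) * c := by
        rw [Finset.sum_comm, Finset.sum_mul]
        simp [← Finset.mul_sum, hrow']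

theorem sum_abs_sub_le_two {ν π : ι → ℝ} (hν : ν ∈ stdSimplex ℝ ι) (hπ : π ∈ stdSimplex ℝ ι) :
    ∑ i, |ν i - π i| ≤ 2 := by
  calc ∑ i, |ν i - π i| ≤ ∑ i, (ν i + π i) := by
        gcongr with i
        exact abs_sub_le_iff.2 ⟨by linarith [hπ.1 i], by linarith [hν.1 i]⟩
    _ = 2 := by rw [Finset.sum_add_distrib, hν.2, hπ.2]; norm_num

end

section

variable {ι : Type*} [Fintype ι] [DecidableEq ι]

def ExpContractsSumZero (L : Matrix ι ι ℝ) (κ : ℝ) : Prop :=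
  ∀ w : ι → ℝ, ∑ i, w i = 0 → ∀ t, 0 ≤ t →
    ∑ j, |(w ᵥ* exp (t • L)) j| ≤ (∑ i, |w i|) * Real.exp (-t * κ)

namespace ExpContractsSumZero

variable {L : Matrix ι ι ℝ} {κ : ℝ}

theorem of_minorization {μ : ι → ℝ}
    (hrow : L *ᵥ 1 = 0) (hμ : ∑ i, μ i = 1) (hmin : ∀ i j, i ≠ j → κ * μ j ≤ L i j) :
    ExpContractsSumZero L κ := by
  intro w hw t ht
  set A := t • (L - κ • replicateRow ι μ)
  have hA_off : ∀ i j, i ≠ j → 0 ≤ A i j := fun i j hij => by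
    simpa [A] using mul_nonneg ht (sub_nonneg.2 (hmin i j hij))
  have hA_row : A *ᵥ 1 = (-t * κ) • 1 := by
    have : replicateRow ι μ *ᵥ 1 = 1 := by
      rw [replicateRow_mulVec_eq_const, dotProduct_one, hμ]; rfl
    simp [A, smul_mulVec, sub_mulVec, hrow, this, smul_smul]
  have hsame : w ᵥ* exp (t • L) = w ᵥ* exp A := by
    refine vecMul_exp_eq_of_forall_vecMul_pow_eq fun n =>
      vecMul_pow_eq_of_forall_mem (S := {v | ∑ i, v i = 0}) ?_ ?_ n w hw
    · intro v _
      simp [← dotProduct_one, ← dotProduct_mulVec, smul_mulVec, hrow]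
    · intro v hv
      have : v ᵥ* replicateRow ι μ = 0 := by
        ext j
        simp [vecMul, dotProduct, ← Finset.sum_mul, hv.out]
      simp [A, vecMul_smul, vecMul_sub, this]
  rw [hsame]
  exact sum_abs_vecMul_le (exp_apply_nonneg hA_off) (exp_mulVec_of_mulVec_eq_smul hA_row) w

theorem eq_zero_of_vecMul_eq_zero (hL : ExpContractsSumZero L κ) (hκ : 0 < κ) {v : ι → ℝ}
    (hvL : v ᵥ* L = 0) (hv : ∑ i, v i = 0) : v = 0 := by
  have h := hL v hv 1 zero_le_one
  rw [vecMul_exp_smul_eq_self hvL] at h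
  have hlt : Real.exp (-1 * κ) < 1 := Real.exp_lt_one_iff.2 (by linarith)
  have hnonneg : 0 ≤ ∑ i, |v i| := Finset.sum_nonneg fun i _ => abs_nonneg (v i)
  have hzero : ∑ i, |v i| = 0 := by nlinarith
  ext i
  simpa using (Finset.sum_eq_zero_iff_of_nonneg fun i _ => abs_nonneg (v i)).1 hzero i
    (Finset.mem_univ i)

theorem nonneg_of_vecMul_eq_zero (hL : ExpContractsSumZero L κ) (hκ : 0 < κ)
    (hoff : ∀ i j, i ≠ j → 0 ≤ L i j) {π : ι → ℝ} (hπL : π ᵥ* L = 0) (hπ : ∑ i, π i = 1)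
    (y : ι) : 0 ≤ π y := by
  set w := π - Pi.single y 1
  have hbound (t : ℝ) (ht : 0 ≤ t) : -(∑ i, |w i|) * Real.exp (-t * κ) ≤ π y := by
    have hsplit : π y = exp (t • L) y y + (w ᵥ* exp (t • L)) y := by
      simp [w, sub_vecMul, vecMul_exp_smul_eq_self hπL]
    have hdiag : 0 ≤ exp (t • L) y y :=
      exp_apply_nonneg (fun i j hij => by simpa using mul_nonneg ht (hoff i j hij)) y y
    have hw : |(w ᵥ* exp (t • L)) y| ≤ (∑ i, |w i|) * Real.exp (-t * κ) :=
      (Finset.single_le_sum (f := fun j => |(w ᵥ* exp (t • L)) j|) (fun j _ => abs_nonneg _)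
        (Finset.mem_univ y)).trans (hL w (by simp [w, hπ]) t ht)
    linarith [neg_abs_le ((w ᵥ* exp (t • L)) y)]
  have hlim : Tendsto (fun t => -(∑ i, |w i|) * Real.exp (-t * κ)) atTop (𝓝 0) := by
    have := Real.tendsto_exp_neg_atTop_nhds_zero.comp (tendsto_id.atTop_mul_const hκ)
    simpa [Function.comp_def, neg_mul] using this.const_mul (-(∑ i, |w i|))
  exact le_of_tendsto hlim (eventually_atTop.2 ⟨0, hbound⟩)

theorem exists_mem_stdSimplex_vecMul_eq_zero [Nonempty ι] (hL : ExpContractsSumZero L κ)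
    (hκ : 0 < κ) (hoff : ∀ i j, i ≠ j → 0 ≤ L i j) (hrow : L *ᵥ 1 = 0) :
    ∃ π ∈ stdSimplex ℝ ι, π ᵥ* L = 0 := by
  obtain ⟨v, hv0, hvL⟩ : ∃ v ≠ 0, v ᵥ* L = 0 :=
    exists_vecMul_eq_zero_iff.2 (exists_mulVec_eq_zero_iff.1 ⟨1, one_ne_zero, hrow⟩)
  have hvsum : ∑ i, v i ≠ 0 := fun h => hv0 (hL.eq_zero_of_vecMul_eq_zero hκ hvL h)
  set π := (∑ i, v i)⁻¹ • v
  have hπL : π ᵥ* L = 0 := by simp [π, smul_vecMul, hvL]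
  have hπ : ∑ i, π i = 1 := by simp [π, ← Finset.mul_sum, hvsum]
  exact ⟨π, ⟨hL.nonneg_of_vecMul_eq_zero hκ hoff hπL hπ, hπ⟩, hπL⟩

end ExpContractsSumZero

end

/-- **Uniform ergodicity of the finite-state Restore process (Proposition 4.3).**
Let `Q` be a transition rate matrix on a finite state space, `μ` a probability vector and
`κ ≥ κ̲ > 0` a regeneration rate, and let `L x y = Q x y + κ x (μ y - 1{x = y})` be the
Restore generator.  Then there is an invariant probability vector `π` for the semigroup
`exp(tL)` such that every initial probability vector `ν` satisfies
`∑_y |(ν exp(tL)) y - π y| ≤ 2 e^{-t κ̲}` for all `t ≥ 0`. -/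
theorem finite_jump_restore_uniformly_ergodic
    {E : Type*} [Fintype E] [DecidableEq E] [Nonempty E]
    (Q : Matrix E E ℝ)
    (hQoff : ∀ x y, x ≠ y → 0 ≤ Q x y)
    (hQrow : ∀ x, ∑ y, Q x y = 0)
    (μ : E → ℝ) (hμnonneg : ∀ x, 0 ≤ μ x) (hμsum : ∑ x, μ x = 1)
    (κ : E → ℝ) (κlow : ℝ) (hκlow : 0 < κlow) (hκ : ∀ x, κlow ≤ κ x)
    (L : Matrix E E ℝ)
    (hL : ∀ x y, L x y = Q x y + κ x * (μ y - if x = y then 1 else 0)) :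
    ∃ π : E → ℝ, (∀ x, 0 ≤ π x) ∧ (∑ x, π x = 1) ∧
      (∀ t : ℝ, 0 ≤ t → ∀ y, ∑ x, π x * NormedSpace.exp (t • L) x y = π y) ∧
      (∀ ν : E → ℝ, (∀ x, 0 ≤ ν x) → (∑ x, ν x = 1) →
        ∀ t : ℝ, 0 ≤ t →
          ∑ y, |(∑ x, ν x * NormedSpace.exp (t • L) x y) - π y|
            ≤ 2 * Real.exp (-t * κlow)) := by
  have hrow : L *ᵥ 1 = 0 := by
    ext x
    simp [mulVec, dotProduct, hL, Finset.sum_add_distrib, mul_sub, Finset.sum_sub_distrib,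
      ← Finset.mul_sum, hQrow, hμsum]
  have hmin : ∀ x y, x ≠ y → κlow * μ y ≤ L x y := fun x y hxy => by
    rw [hL, if_neg hxy, sub_zero]
    nlinarith [hQoff x y hxy, mul_le_mul_of_nonneg_right (hκ x) (hμnonneg y)]
  have hoff : ∀ x y, x ≠ y → 0 ≤ L x y := fun x y hxy =>
    (mul_nonneg hκlow.le (hμnonneg y)).trans (hmin x y hxy)
  have hcontr : ExpContractsSumZero L κlow :=
    .of_minorization hrow hμsum hmin
  obtain ⟨π, hπ, hπL⟩ := hcontr.exists_mem_stdSimplex_vecMul_eq_zero hκlow hoff hrow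
  refine ⟨π, hπ.1, hπ.2, fun t _ y => congrFun (vecMul_exp_smul_eq_self hπL t) y,
    fun ν hν0 hν1 t ht => ?_⟩
  calc ∑ y, |(∑ x, ν x * NormedSpace.exp (t • L) x y) - π y|
      = ∑ y, |((ν - π) ᵥ* NormedSpace.exp (t • L)) y| := by
        rw [sub_vecMul, vecMul_exp_smul_eq_self hπL]; rfl
    _ ≤ (∑ x, |(ν - π) x|) * Real.exp (-t * κlow) :=
        hcontr _ (by simp [Finset.sum_sub_distrib, hν1, hπ.2]) t ht
    _ ≤ 2 * Real.exp (-t * κlow) := by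
        gcongr
        exact sum_abs_sub_le_two ⟨hν0, hν1⟩ hπ
end

section
/- Let d ≥ 1, K > 0, R ≥ 0 and M > 0. Let A : ℝ^d → ℝ be smooth with ‖∇A(x)‖ ≤ K‖x‖ for all x with ‖x‖ ≥ R. Let p̄ : ℝ^d → ℝ be smooth such that p̄, all its first-order partial derivatives, and all its second-order partial derivatives are Lebesgue-integrable, and such that x ↦ ⟨∇A(x), ∇p̄(x)⟩ and x ↦ ΔA(x)·p̄(x) are Lebesgue-integrable. Let g : ℝ^d → ℝ be smooth with g(x) = 1 for ‖x‖ ≤ 1, g(x) = 0 for ‖x‖ ≥ 2, and |g|, ‖∇g‖ and all second-order partial derivatives of g bounded by M. For n ≥ 1 set p̄_n(x) := g(x/n)·p̄(x). Then ∫_{ℝ^d} | (1/2)Δp̄_n(x) − ⟨∇A(x), ∇p̄_n(x)⟩ − ΔA(x)p̄_n(x) − ( (1/2)Δp̄(x) − ⟨∇A(x), ∇p̄(x)⟩ − ΔA(x)p̄(x) ) | dx → 0 as n → ∞. -/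
open MeasureTheory Filter Topology
open scoped RealInnerProductSpace

/-- The partial derivative of `f : ℝ^d → ℝ` in the `i`-th coordinate direction. -/
noncomputable def partialDeriv' {d : ℕ} (f : EuclideanSpace ℝ (Fin d) → ℝ) (i : Fin d)
    (x : EuclideanSpace ℝ (Fin d)) : ℝ :=
  fderiv ℝ f x (EuclideanSpace.single i 1)

/-- The Laplacian of `f : ℝ^d → ℝ`, as the sum of the second partial derivatives. -/
noncomputable def laplacian' {d : ℕ} (f : EuclideanSpace ℝ (Fin d) → ℝ)
    (x : EuclideanSpace ℝ (Fin d)) : ℝ :=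
  ∑ i, partialDeriv' (partialDeriv' f i) i x

section Aux

variable {d : ℕ}
local notation "E" => EuclideanSpace ℝ (Fin d)

lemma pd_contDiff {f : E → ℝ} (hf : ContDiff ℝ (⊤ : ℕ∞) f) (i : Fin d) :
    ContDiff ℝ (⊤ : ℕ∞) (partialDeriv' f i) :=
  (hf.fderiv_right (by simp)).clm_apply contDiff_const

lemma norm_gradient' (f : E → ℝ) (x : E) : ‖gradient f x‖ = ‖fderiv ℝ f x‖ :=
  LinearIsometryEquiv.norm_map _ _

lemma abs_pd_le (f : E → ℝ) (i : Fin d) (x : E) :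
    |partialDeriv' f i x| ≤ ‖gradient f x‖ := by
  rw [norm_gradient']
  calc |partialDeriv' f i x| ≤ ‖fderiv ℝ f x‖ * ‖EuclideanSpace.single i (1:ℝ)‖ :=
        (fderiv ℝ f x).le_opNorm _
    _ = ‖fderiv ℝ f x‖ := by rw [EuclideanSpace.norm_single]; simp

lemma pd_mul {f g : E → ℝ} (hf : ContDiff ℝ (⊤ : ℕ∞) f) (hg : ContDiff ℝ (⊤ : ℕ∞) g) (i : Fin d) (x : E) :
    partialDeriv' (fun y => f y * g y) i x
      = f x * partialDeriv' g i x + g x * partialDeriv' f i x := by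
  unfold partialDeriv'
  rw [fderiv_fun_mul (hf.differentiable (by simp) x) (hg.differentiable (by simp) x)]
  simp

lemma pd_add {f g : E → ℝ} (hf : ContDiff ℝ (⊤ : ℕ∞) f) (hg : ContDiff ℝ (⊤ : ℕ∞) g) (i : Fin d) (x : E) :
    partialDeriv' (fun y => f y + g y) i x = partialDeriv' f i x + partialDeriv' g i x := by
  unfold partialDeriv'
  rw [fderiv_fun_add (hf.differentiable (by simp) x) (hg.differentiable (by simp) x)]
  simp

lemma gradient_mul' {f g : E → ℝ} (hf : ContDiff ℝ (⊤ : ℕ∞) f) (hg : ContDiff ℝ (⊤ : ℕ∞) g) (x : E) :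
    gradient (fun y => f y * g y) x = f x • gradient g x + g x • gradient f x := by
  unfold gradient
  rw [fderiv_fun_mul (hf.differentiable (by simp) x) (hg.differentiable (by simp) x)]
  simp [_root_.map_add, _root_.map_smul]

lemma fderiv_comp_smul' {f : E → ℝ} (hf : ContDiff ℝ (⊤ : ℕ∞) f) (c : ℝ) (x : E) :
    fderiv ℝ (fun y => f (c • y)) x = c • fderiv ℝ f (c • x) := by
  have h : (fun y : E => f (c • y))
      = f ∘ (c • ContinuousLinearMap.id ℝ (EuclideanSpace ℝ (Fin d))) := rfl
  rw [h, fderiv_comp (x := x) (hf.differentiable (by simp) _)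
    (c • ContinuousLinearMap.id ℝ (EuclideanSpace ℝ (Fin d))).differentiableAt]
  rw [ContinuousLinearMap.fderiv]
  ext v
  simp

lemma pd_comp_smul {f : E → ℝ} (hf : ContDiff ℝ (⊤ : ℕ∞) f) (c : ℝ) (i : Fin d) (x : E) :
    partialDeriv' (fun y => f (c • y)) i x = c * partialDeriv' f i (c • x) := by
  unfold partialDeriv'
  rw [fderiv_comp_smul' hf c x]
  simp

lemma gradient_comp_smul {f : E → ℝ} (hf : ContDiff ℝ (⊤ : ℕ∞) f) (c : ℝ) (x : E) :
    gradient (fun y => f (c • y)) x = c • gradient f (c • x) := by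
  unfold gradient
  rw [fderiv_comp_smul' hf c x]
  simp [_root_.map_smul]

lemma contDiff_comp_smul {f : E → ℝ} (hf : ContDiff ℝ (⊤ : ℕ∞) f) (c : ℝ) :
    ContDiff ℝ (⊤ : ℕ∞) (fun y : EuclideanSpace ℝ (Fin d) => f (c • y)) :=
  hf.comp (contDiff_id.const_smul c)

lemma pd_const_mul {f : E → ℝ} (hf : ContDiff ℝ (⊤ : ℕ∞) f) (c : ℝ) (i : Fin d) (x : E) :
    partialDeriv' (fun y => c * f y) i x = c * partialDeriv' f i x := by
  unfold partialDeriv'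
  rw [fderiv_const_mul (hf.differentiable (by simp) x)]
  simp

lemma pd2_comp_smul {f : E → ℝ} (hf : ContDiff ℝ (⊤ : ℕ∞) f) (c : ℝ) (i j : Fin d) (x : E) :
    partialDeriv' (partialDeriv' (fun y => f (c • y)) i) j x
      = c ^ 2 * partialDeriv' (partialDeriv' f i) j (c • x) := by
  have e : partialDeriv' (fun y => f (c • y)) i = fun y => c * partialDeriv' f i (c • y) :=
    funext fun y => pd_comp_smul hf c i y
  rw [e, pd_const_mul (contDiff_comp_smul (pd_contDiff hf i) c) c j x,
    pd_comp_smul (pd_contDiff hf i) c j x]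
  ring

lemma pd_eq_of_eqOn {f g : E → ℝ} {s : Set (EuclideanSpace ℝ (Fin d))} (hs : IsOpen s)
    (h : ∀ y ∈ s, f y = g y) {i : Fin d} {x : E} (hx : x ∈ s) :
    partialDeriv' f i x = partialDeriv' g i x := by
  unfold partialDeriv'
  rw [Filter.EventuallyEq.fderiv_eq (Filter.eventuallyEq_of_mem (hs.mem_nhds hx) h)]

lemma gradient_eq_of_eqOn {f g : E → ℝ} {s : Set (EuclideanSpace ℝ (Fin d))} (hs : IsOpen s)
    (h : ∀ y ∈ s, f y = g y) {x : E} (hx : x ∈ s) :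
    gradient f x = gradient g x :=
  Filter.EventuallyEq.gradient_eq (Filter.eventuallyEq_of_mem (hs.mem_nhds hx) h)

lemma gradient_zero_of_eqOn_const {f : E → ℝ} {s : Set (EuclideanSpace ℝ (Fin d))}
    (hs : IsOpen s) {a : ℝ} (h : ∀ y ∈ s, f y = a) {x : E} (hx : x ∈ s) :
    gradient f x = 0 := by
  rw [gradient_eq_of_eqOn hs (g := fun _ => a) h hx, gradient_fun_const]

lemma laplacian_mul {f p : E → ℝ} (hf : ContDiff ℝ (⊤ : ℕ∞) f) (hp : ContDiff ℝ (⊤ : ℕ∞) p) (x : E) :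
    laplacian' (fun y => f y * p y) x
      = f x * laplacian' p x
        + 2 * ∑ i, partialDeriv' f i x * partialDeriv' p i x
        + p x * ∑ i, partialDeriv' (partialDeriv' f i) i x := by
  unfold laplacian'
  have key : ∀ i : Fin d, partialDeriv' (partialDeriv' (fun y => f y * p y) i) i x
      = f x * partialDeriv' (partialDeriv' p i) i x
        + 2 * (partialDeriv' f i x * partialDeriv' p i x)
        + p x * partialDeriv' (partialDeriv' f i) i x := by
    intro i
    have e1 : partialDeriv' (fun y => f y * p y) i
        = fun y => (f y * partialDeriv' p i y) + (p y * partialDeriv' f i y) :=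
      funext fun y => pd_mul hf hp i y
    rw [e1, pd_add (hf.mul (pd_contDiff hp i)) (hp.mul (pd_contDiff hf i)),
      pd_mul hf (pd_contDiff hp i), pd_mul hp (pd_contDiff hf i)]
    ring
  rw [Finset.sum_congr rfl fun i _ => key i, Finset.sum_add_distrib, Finset.sum_add_distrib,
    ← Finset.mul_sum, ← Finset.mul_sum, ← Finset.mul_sum]

lemma inner_gradient_mul {A f p : E → ℝ} (hf : ContDiff ℝ (⊤ : ℕ∞) f) (hp : ContDiff ℝ (⊤ : ℕ∞) p) (x : E) :
    ⟪gradient A x, gradient (fun y => f y * p y) x⟫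
      = f x * ⟪gradient A x, gradient p x⟫ + p x * ⟪gradient A x, gradient f x⟫ := by
  rw [gradient_mul' hf hp, inner_add_right, real_inner_smul_right, real_inner_smul_right]

lemma gradient_continuous' {f : E → ℝ} (hf : ContDiff ℝ (⊤ : ℕ∞) f) :
    Continuous (fun x : E => gradient f x) := by
  have h : (fun x : E => gradient f x)
      = fun x => (InnerProductSpace.toDual ℝ (EuclideanSpace ℝ (Fin d))).symm (fderiv ℝ f x) :=
    rfl
  rw [h]
  exact (LinearIsometryEquiv.continuous _).comp
    (hf.fderiv_right (m := (⊤ : ℕ∞)) (by simp)).continuous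

lemma laplacian'_continuous {f : E → ℝ} (hf : ContDiff ℝ (⊤ : ℕ∞) f) : Continuous (laplacian' f) := by
  unfold laplacian'
  exact continuous_finset_sum _ fun i _ => (pd_contDiff (pd_contDiff hf i) i).continuous

end Aux

/-- **Analytic core of Lemma 3.6.** With `p̄` smooth and integrable together with all its
first and second partial derivatives, `∇A` of at most linear growth in the tails,
`⟨∇A, ∇p̄⟩` and `(ΔA) p̄` integrable, and `g` a smooth cutoff (`g = 1` on `‖x‖ ≤ 1`,
`g = 0` on `‖x‖ ≥ 2`, with `g`, `∇g` and all second partials of `g` bounded by `M`),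
setting `p̄_n x = g (x/n) p̄ x`, the expressions
`(1/2)Δp̄_n - ⟨∇A, ∇p̄_n⟩ - (ΔA) p̄_n` converge in `L¹(ℝ^d)` to
`(1/2)Δp̄ - ⟨∇A, ∇p̄⟩ - (ΔA) p̄`. -/
theorem mollified_generator_expression_L1_convergence
    (d : ℕ) (hd : 1 ≤ d) (K R M : ℝ) (hK : 0 < K) (hR : 0 ≤ R) (hM : 0 < M)
    (A : EuclideanSpace ℝ (Fin d) → ℝ) (hA : ContDiff ℝ (⊤ : ℕ∞) A)
    (hAgrad : ∀ x, R ≤ ‖x‖ → ‖gradient A x‖ ≤ K * ‖x‖)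
    (pbar : EuclideanSpace ℝ (Fin d) → ℝ) (hpbar : ContDiff ℝ (⊤ : ℕ∞) pbar)
    (hpbarInt : Integrable pbar volume)
    (hpbar1Int : ∀ i, Integrable (partialDeriv' pbar i) volume)
    (hpbar2Int : ∀ i j, Integrable (partialDeriv' (partialDeriv' pbar i) j) volume)
    (hdriftInt : Integrable (fun x => ⟪gradient A x, gradient pbar x⟫) volume)
    (hlapAInt : Integrable (fun x => laplacian' A x * pbar x) volume)
    (g : EuclideanSpace ℝ (Fin d) → ℝ) (hg : ContDiff ℝ (⊤ : ℕ∞) g)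
    (hg1 : ∀ x : EuclideanSpace ℝ (Fin d), ‖x‖ ≤ 1 → g x = 1)
    (hg0 : ∀ x : EuclideanSpace ℝ (Fin d), 2 ≤ ‖x‖ → g x = 0)
    (hgbd : ∀ x, |g x| ≤ M)
    (hggradbd : ∀ x, ‖gradient g x‖ ≤ M)
    (hg2bd : ∀ i j, ∀ x, |partialDeriv' (partialDeriv' g i) j x| ≤ M)
    (pbarn : ℕ → EuclideanSpace ℝ (Fin d) → ℝ)
    (hpbarn : ∀ n x, pbarn n x = g ((n : ℝ)⁻¹ • x) * pbar x) :
    Tendsto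
      (fun n : ℕ =>
        ∫ x : EuclideanSpace ℝ (Fin d),
          |(1 / 2) * laplacian' (pbarn n) x - ⟪gradient A x, gradient (pbarn n) x⟫
              - laplacian' A x * pbarn n x
            - ((1 / 2) * laplacian' pbar x - ⟪gradient A x, gradient pbar x⟫
              - laplacian' A x * pbar x)| ∂volume)
      atTop (𝓝 0) := by
  -- the difference function
  set D : ℕ → (EuclideanSpace ℝ (Fin d)) → ℝ := fun n x =>
    (1 / 2) * laplacian' (pbarn n) x - ⟪gradient A x, gradient (pbarn n) x⟫
      - laplacian' A x * pbarn n x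
      - ((1 / 2) * laplacian' pbar x - ⟪gradient A x, gradient pbar x⟫
        - laplacian' A x * pbar x) with hD
  -- the dominating function
  set G : (EuclideanSpace ℝ (Fin d)) → ℝ := fun x =>
    (M + 1) / 2 * ∑ i, |partialDeriv' (partialDeriv' pbar i) i x|
      + M * ∑ i, |partialDeriv' pbar i x|
      + (d * M / 2) * |pbar x|
      + (M + 1) * |⟪gradient A x, gradient pbar x⟫|
      + 2 * K * M * |pbar x|
      + (M + 1) * |laplacian' A x * pbar x| with hG
  -- pbarn as a product, and its smoothness
  have hpn_eq : ∀ n : ℕ, pbarn n = fun y => g ((n : ℝ)⁻¹ • y) * pbar y := fun n =>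
    funext fun y => hpbarn n y
  have hgn : ∀ n : ℕ, ContDiff ℝ (⊤ : ℕ∞) (fun y : (EuclideanSpace ℝ (Fin d)) => g ((n : ℝ)⁻¹ • y)) := fun n =>
    contDiff_comp_smul hg _
  have hpn_smooth : ∀ n : ℕ, ContDiff ℝ (⊤ : ℕ∞) (pbarn n) := by
    intro n; rw [hpn_eq n]; exact (hgn n).mul hpbar
  -- gradient of g vanishes inside the unit ball and outside radius 2
  have hgrad_in : ∀ y : (EuclideanSpace ℝ (Fin d)), ‖y‖ < 1 → gradient g y = 0 := by
    intro y hy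
    exact gradient_zero_of_eqOn_const (isOpen_lt continuous_norm continuous_const)
      (fun z hz => hg1 z (le_of_lt hz)) hy
  have hgrad_out : ∀ y : (EuclideanSpace ℝ (Fin d)), 2 < ‖y‖ → gradient g y = 0 := by
    intro y hy
    exact gradient_zero_of_eqOn_const (isOpen_lt continuous_const continuous_norm)
      (fun z hz => hg0 z (le_of_lt hz)) hy
  -- measurability
  have hmeas : ∀ n : ℕ, AEStronglyMeasurable (fun x => |D n x|) volume := by
    intro n
    have hc : Continuous (D n) := by
      rw [hD]
      have c1 : Continuous (fun x => (1/2 : ℝ) * laplacian' (pbarn n) x) :=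
        continuous_const.mul (laplacian'_continuous (hpn_smooth n))
      have c2 : Continuous (fun x => ⟪gradient A x, gradient (pbarn n) x⟫) :=
        (gradient_continuous' hA).inner (gradient_continuous' (hpn_smooth n))
      have c3 : Continuous (fun x => laplacian' A x * pbarn n x) :=
        (laplacian'_continuous hA).mul (hpn_smooth n).continuous
      have c4 : Continuous (fun x => (1/2 : ℝ) * laplacian' pbar x) :=
        continuous_const.mul (laplacian'_continuous hpbar)
      have c5 : Continuous (fun x => ⟪gradient A x, gradient pbar x⟫) :=
        (gradient_continuous' hA).inner (gradient_continuous' hpbar)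
      have c6 : Continuous (fun x => laplacian' A x * pbar x) :=
        (laplacian'_continuous hA).mul hpbar.continuous
      exact ((c1.sub c2).sub c3).sub ((c4.sub c5).sub c6)
    exact hc.abs.aestronglyMeasurable
  -- integrability of the dominating function
  have hGint : Integrable G volume := by
    rw [hG]
    exact ((((((integrable_finset_sum _ fun i _ => (hpbar2Int i i).abs).const_mul _).add
      ((integrable_finset_sum _ fun i _ => (hpbar1Int i).abs).const_mul _)).add
      (hpbarInt.abs.const_mul _)).add (hdriftInt.abs.const_mul _)).add
      (hpbarInt.abs.const_mul _)).add (hlapAInt.abs.const_mul _)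
  -- the eventual domination
  have hbound : ∀ᶠ n : ℕ in atTop,
      ∀ᵐ x ∂(volume : Measure (EuclideanSpace ℝ (Fin d))), ‖|D n x|‖ ≤ G x := by
    filter_upwards [eventually_ge_atTop 1, eventually_ge_atTop ⌈R⌉₊] with n hn1 hnR
    refine Eventually.of_forall fun x => ?_
    have hn1' : (1 : ℝ) ≤ (n : ℝ) := by exact_mod_cast hn1
    have hn0 : (0 : ℝ) < n := lt_of_lt_of_le one_pos hn1'
    have hnR' : R ≤ (n : ℝ) := le_trans (Nat.le_ceil R) (by exact_mod_cast hnR)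
    set c : ℝ := (n : ℝ)⁻¹ with hc
    have hc0 : 0 < c := inv_pos.mpr hn0
    have hc1 : c ≤ 1 := by rw [hc]; exact inv_le_one_of_one_le₀ hn1'
    have hcn : c * (n : ℝ) = 1 := inv_mul_cancel₀ (ne_of_gt hn0)
    -- expand D n x
    have hDx : D n x
        = 1/2 * (g (c • x) - 1) * laplacian' pbar x
          + (∑ i, partialDeriv' (fun y => g (c • y)) i x * partialDeriv' pbar i x)
          + 1/2 * pbar x
            * (∑ i, partialDeriv' (partialDeriv' (fun y => g (c • y)) i) i x)
          - (g (c • x) - 1) * ⟪gradient A x, gradient pbar x⟫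
          - pbar x * ⟪gradient A x,
              gradient (fun y : EuclideanSpace ℝ (Fin d) => g (c • y)) x⟫
          - (g (c • x) - 1) * (laplacian' A x * pbar x) := by
      simp only [hD, hpn_eq n]
      rw [laplacian_mul (hgn n) hpbar x, inner_gradient_mul (hgn n) hpbar x, ← hc]
      ring
    -- bounds on the cutoff pieces
    have habsG0 : |g (c • x) - 1| ≤ M + 1 :=
      le_trans (abs_sub _ 1) (by simpa using add_le_add_right (hgbd (c • x)) 1)
    have hpd1 : ∀ i, |partialDeriv' (fun y => g (c • y)) i x| ≤ M := by
      intro i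
      rw [pd_comp_smul hg c i x, abs_mul, abs_of_pos hc0]
      calc c * |partialDeriv' g i (c • x)| ≤ 1 * ‖gradient g (c • x)‖ :=
            mul_le_mul hc1 (abs_pd_le g i (c • x)) (abs_nonneg _) zero_le_one
        _ ≤ M := by rw [one_mul]; exact hggradbd (c • x)
    have hSbd : |∑ i, partialDeriv' (fun y => g (c • y)) i x * partialDeriv' pbar i x|
        ≤ M * ∑ i, |partialDeriv' pbar i x| := by
      refine le_trans (Finset.abs_sum_le_sum_abs _ _) ?_
      rw [Finset.mul_sum]
      refine Finset.sum_le_sum fun i _ => ?_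
      rw [abs_mul]
      exact mul_le_mul_of_nonneg_right (hpd1 i) (abs_nonneg _)
    have hTbd : |∑ i, partialDeriv' (partialDeriv' (fun y => g (c • y)) i) i x|
        ≤ d * M := by
      refine le_trans (Finset.abs_sum_le_sum_abs _ _) ?_
      have hterm : ∀ i : Fin d,
          |partialDeriv' (partialDeriv' (fun y => g (c • y)) i) i x| ≤ M := by
        intro i
        rw [pd2_comp_smul hg c i i x, abs_mul, abs_of_pos (by positivity : (0:ℝ) < c ^ 2)]
        calc c ^ 2 * |partialDeriv' (partialDeriv' g i) i (c • x)| ≤ 1 * M := by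
              refine mul_le_mul ?_ (hg2bd i i (c • x)) (abs_nonneg _) zero_le_one
              calc c ^ 2 ≤ 1 ^ 2 := pow_le_pow_left₀ (le_of_lt hc0) hc1 2
                _ = 1 := one_pow 2
          _ = M := one_mul M
      refine le_trans (Finset.sum_le_sum fun i _ => hterm i) ?_
      simp [Finset.sum_const, Finset.card_univ]
    have hI2bd : |⟪gradient A x,
        gradient (fun y : EuclideanSpace ℝ (Fin d) => g (c • y)) x⟫| ≤ 2 * K * M := by
      rcases lt_or_ge ‖x‖ (n : ℝ) with hx | hx
      · have hz : gradient (fun y : EuclideanSpace ℝ (Fin d) => g (c • y)) x = 0 := by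
          rw [gradient_comp_smul hg c x, hgrad_in (c • x), smul_zero]
          rw [norm_smul, Real.norm_eq_abs, abs_of_pos hc0]
          calc c * ‖x‖ < c * n := (mul_lt_mul_iff_right₀ hc0).mpr hx
            _ = 1 := hcn
        rw [hz, inner_zero_right, abs_zero]
        positivity
      · rcases le_or_gt ‖x‖ (2 * n) with hx2 | hx2
        · have hgrbd : ‖gradient (fun y : EuclideanSpace ℝ (Fin d) => g (c • y)) x‖
              ≤ c * M := by
            rw [gradient_comp_smul hg c x, norm_smul, Real.norm_eq_abs, abs_of_pos hc0]
            exact mul_le_mul_of_nonneg_left (hggradbd (c • x)) (le_of_lt hc0)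
          have hAbd : ‖gradient A x‖ ≤ K * (2 * n) := by
            refine le_trans (hAgrad x (le_trans hnR' hx)) ?_
            exact mul_le_mul_of_nonneg_left hx2 (le_of_lt hK)
          calc |⟪gradient A x,
              gradient (fun y : EuclideanSpace ℝ (Fin d) => g (c • y)) x⟫|
              ≤ ‖gradient A x‖
                * ‖gradient (fun y : EuclideanSpace ℝ (Fin d) => g (c • y)) x‖ :=
                abs_real_inner_le_norm _ _
            _ ≤ (K * (2 * n)) * (c * M) := by
                refine mul_le_mul hAbd hgrbd (norm_nonneg _) ?_
                positivity
            _ = 2 * K * M * (c * n) := by ring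
            _ = 2 * K * M := by rw [hcn, mul_one]
        · have hz : gradient (fun y : EuclideanSpace ℝ (Fin d) => g (c • y)) x = 0 := by
            rw [gradient_comp_smul hg c x, hgrad_out (c • x), smul_zero]
            rw [norm_smul, Real.norm_eq_abs, abs_of_pos hc0]
            calc (2:ℝ) = c * (2 * n) := by
                  rw [mul_comm (2:ℝ) (n:ℝ), ← mul_assoc, hcn, one_mul]
              _ < c * ‖x‖ := (mul_lt_mul_iff_right₀ hc0).mpr hx2
          rw [hz, inner_zero_right, abs_zero]
          positivity
    -- put the bounds together
    rw [Real.norm_eq_abs, abs_abs]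
    have b1 : |1/2 * (g (c • x) - 1) * laplacian' pbar x|
        ≤ (M + 1) / 2 * ∑ i, |partialDeriv' (partialDeriv' pbar i) i x| := by
      rw [abs_mul, abs_mul]
      have hLp : |laplacian' pbar x| ≤ ∑ i, |partialDeriv' (partialDeriv' pbar i) i x| :=
        Finset.abs_sum_le_sum_abs _ _
      calc |(1/2 : ℝ)| * |g (c • x) - 1| * |laplacian' pbar x|
          ≤ (1/2 * (M + 1)) * ∑ i, |partialDeriv' (partialDeriv' pbar i) i x| := by
            refine mul_le_mul ?_ hLp (abs_nonneg _) (by positivity)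
            rw [abs_of_pos (by norm_num : (0:ℝ) < 1/2)]
            exact mul_le_mul_of_nonneg_left habsG0 (by norm_num)
        _ = (M + 1) / 2 * ∑ i, |partialDeriv' (partialDeriv' pbar i) i x| := by ring
    have b3 : |1/2 * pbar x
          * (∑ i, partialDeriv' (partialDeriv' (fun y => g (c • y)) i) i x)|
        ≤ (d * M / 2) * |pbar x| := by
      rw [abs_mul, abs_mul, abs_of_pos (by norm_num : (0:ℝ) < 1/2)]
      calc 1/2 * |pbar x| * |∑ i, partialDeriv' (partialDeriv' (fun y => g (c • y)) i) i x|
          ≤ 1/2 * |pbar x| * (d * M) :=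
            mul_le_mul_of_nonneg_left hTbd (by positivity)
        _ = (d * M / 2) * |pbar x| := by ring
    have b4 : |(g (c • x) - 1) * ⟪gradient A x, gradient pbar x⟫|
        ≤ (M + 1) * |⟪gradient A x, gradient pbar x⟫| := by
      rw [abs_mul]
      exact mul_le_mul_of_nonneg_right habsG0 (abs_nonneg _)
    have b5 : |pbar x * ⟪gradient A x,
          gradient (fun y : EuclideanSpace ℝ (Fin d) => g (c • y)) x⟫|
        ≤ 2 * K * M * |pbar x| := by
      rw [abs_mul]
      calc |pbar x| * |⟪gradient A x,
            gradient (fun y : EuclideanSpace ℝ (Fin d) => g (c • y)) x⟫|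
          ≤ |pbar x| * (2 * K * M) := mul_le_mul_of_nonneg_left hI2bd (abs_nonneg _)
        _ = 2 * K * M * |pbar x| := by ring
    have b6 : |(g (c • x) - 1) * (laplacian' A x * pbar x)|
        ≤ (M + 1) * |laplacian' A x * pbar x| := by
      rw [abs_mul]
      exact mul_le_mul_of_nonneg_right habsG0 (abs_nonneg _)
    have htri : |D n x| ≤
        |1/2 * (g (c • x) - 1) * laplacian' pbar x|
        + |∑ i, partialDeriv' (fun y => g (c • y)) i x * partialDeriv' pbar i x|
        + |1/2 * pbar x
            * (∑ i, partialDeriv' (partialDeriv' (fun y => g (c • y)) i) i x)|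
        + |(g (c • x) - 1) * ⟪gradient A x, gradient pbar x⟫|
        + |pbar x * ⟪gradient A x,
            gradient (fun y : EuclideanSpace ℝ (Fin d) => g (c • y)) x⟫|
        + |(g (c • x) - 1) * (laplacian' A x * pbar x)| := by
      rw [hDx]
      refine le_trans (abs_sub _ _) (add_le_add_left ?_ _)
      refine le_trans (abs_sub _ _) (add_le_add_left ?_ _)
      refine le_trans (abs_sub _ _) (add_le_add_left ?_ _)
      refine le_trans (abs_add_le _ _) (add_le_add_left ?_ _)
      exact abs_add_le _ _
    refine le_trans htri ?_
    simp only [hG]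
    linarith [b1, hSbd, b3, b4, b5, b6]
  -- pointwise convergence to zero
  have hlim : ∀ x : (EuclideanSpace ℝ (Fin d)), Tendsto (fun n => |D n x|) atTop (𝓝 0) := by
    intro x
    have hev : ∀ᶠ n : ℕ in atTop, |D n x| = 0 := by
      filter_upwards [eventually_ge_atTop (⌈‖x‖⌉₊ + 1)] with n hn
      have hn1 : (1 : ℝ) ≤ (n : ℝ) := by
        have : (1 : ℕ) ≤ n := le_trans (Nat.le_add_left 1 _) hn
        exact_mod_cast this
      have hn0 : (0 : ℝ) < n := lt_of_lt_of_le one_pos hn1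
      have hxn : ‖x‖ < (n : ℝ) := by
        calc ‖x‖ ≤ (⌈‖x‖⌉₊ : ℝ) := Nat.le_ceil _
          _ < (⌈‖x‖⌉₊ : ℝ) + 1 := by linarith
          _ ≤ (n : ℝ) := by exact_mod_cast hn
      set s : Set (EuclideanSpace ℝ (Fin d)) := {y : (EuclideanSpace ℝ (Fin d)) | ‖y‖ < (n : ℝ)} with hs
      have hsopen : IsOpen s := isOpen_lt continuous_norm continuous_const
      have hxs : x ∈ s := hxn
      have heq : ∀ y ∈ s, pbarn n y = pbar y := by
        intro y hy
        rw [hpbarn n y]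
        have : ‖(n : ℝ)⁻¹ • y‖ ≤ 1 := by
          rw [norm_smul, Real.norm_eq_abs, abs_of_pos (inv_pos.mpr hn0)]
          calc (n : ℝ)⁻¹ * ‖y‖ ≤ (n : ℝ)⁻¹ * n :=
                mul_le_mul_of_nonneg_left (le_of_lt hy) (le_of_lt (inv_pos.mpr hn0))
            _ = 1 := inv_mul_cancel₀ (ne_of_gt hn0)
        rw [hg1 _ this, one_mul]
      have hval : pbarn n x = pbar x := heq x hxs
      have hgrad : gradient (pbarn n) x = gradient pbar x := gradient_eq_of_eqOn hsopen heq hxs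
      have hlap : laplacian' (pbarn n) x = laplacian' pbar x := by
        unfold laplacian'
        refine Finset.sum_congr rfl fun i _ => ?_
        have hpd : ∀ y ∈ s, partialDeriv' (pbarn n) i y = partialDeriv' pbar i y :=
          fun y hy => pd_eq_of_eqOn hsopen heq hy
        exact pd_eq_of_eqOn hsopen hpd hxs
      rw [hD]
      simp only
      rw [hval, hgrad, hlap]
      simp
    exact Tendsto.congr' (Filter.EventuallyEq.symm hev) tendsto_const_nhds
  have := tendsto_integral_filter_of_dominated_convergence (μ := (volume : Measure (EuclideanSpace ℝ (Fin d))))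
    (F := fun n x => |D n x|) (f := fun _ => (0 : ℝ)) G
    (Eventually.of_forall hmeas) hbound hGint
    (Eventually.of_forall hlim)
  rw [integral_zero] at this
  exact this
end

section
/- Let (E, 𝓔) be a measurable space with σ-finite measure m, and let π, μ : E → ℝ be probability densities with respect to m (nonnegative, integrating to 1) such that π(x) > 0, μ(x) > 0, and π(x) ≤ M·μ(x) for all x ∈ E, for some constant M > 0. On a probability space let X be a random element of E whose law has density μ with respect to m, and let ξ₁, ξ₂ be independent standard exponential (rate 1) random variables, independent of X. Then for every measurable B ⊆ E, P( (M·μ(X)/π(X) − 1)·ξ₁ < ξ₂ and X ∈ B ) = (1/M) ∫_B π dm. In particular P( (Mμ(X)/π(X) − 1)ξ₁ < ξ₂ ) = 1/M, and the conditional distribution of X given the event { (Mμ(X)/π(X) − 1)ξ₁ < ξ₂ } has density π with respect to m. -/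
/-!
Given `X = x`, acceptance is the event `c ξ₁ < ξ₂` with `c = M μ(x) / π(x) - 1 ≥ 0`, which has
probability `∫ e^{-t} e^{-c t} dt = 1 / (1 + c) = π(x) / (M μ(x))`, the acceptance probability of
classical rejection sampling. Integrating against the law `μ dm` of `X` gives
`P(accept, X ∈ B) = M⁻¹ ∫_B π dm`; taking `B = E` gives `P(accept) = M⁻¹`, and dividing the two
identifies the conditional law of `X` as `π dm`.
-/

open MeasureTheory ProbabilityTheory Set

lemma expMeasure_Ioi {r y : ℝ} (hr : 0 < r) (hy : 0 ≤ y) :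
    expMeasure r (Ioi y) = ENNReal.ofReal (Real.exp (-(r * y))) := by
  have := isProbabilityMeasure_expMeasure hr
  have hcdf : 0 ≤ 1 - Real.exp (-(r * y)) :=
    sub_nonneg.2 (Real.exp_le_one_iff.2 (neg_nonpos.2 (mul_nonneg hr.le hy)))
  rw [← compl_Iic, prob_compl_eq_one_sub measurableSet_Iic, ← ofReal_cdf, cdf_expMeasure_eq hr,
    if_pos hy, ← ENNReal.ofReal_one, ← ENNReal.ofReal_sub _ hcdf]
  ring_nf

lemma expMeasure_prod_setOf_mul_lt {r s a : ℝ} (hr : 0 < r) (hs : 0 < s) (ha : 0 ≤ a) :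
    (expMeasure r).prod (expMeasure s) {p : ℝ × ℝ | a * p.1 < p.2}
      = ENNReal.ofReal (r / (r + s * a)) := by
  have := isProbabilityMeasure_expMeasure hs
  have hrsa : 0 < r + s * a := by positivity
  have hmeas : MeasurableSet {p : ℝ × ℝ | a * p.1 < p.2} :=
    measurableSet_lt (measurable_fst.const_mul a) measurable_snd
  have hpdf : ∀ t, Measurable (exponentialPDF t) := fun t =>
    (measurable_exponentialPDFReal t).ennreal_ofReal
  have hpt : ∀ t, exponentialPDF r t * expMeasure s (Ioi (a * t))
      = ENNReal.ofReal (r / (r + s * a)) * exponentialPDF (r + s * a) t := by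
    intro t
    rcases lt_or_ge t 0 with ht | ht
    · simp only [exponentialPDF_of_neg ht, zero_mul, mul_zero]
    · rw [exponentialPDF_of_nonneg ht, exponentialPDF_of_nonneg ht,
        expMeasure_Ioi hs (mul_nonneg ha ht), ← ENNReal.ofReal_mul (by positivity),
        ← ENNReal.ofReal_mul (by positivity), mul_assoc, ← Real.exp_add, ← mul_assoc (r / _),
        div_mul_cancel₀ r hrsa.ne']
      ring_nf
  rw [Measure.prod_apply hmeas]
  change ∫⁻ t, expMeasure s (Ioi (a * t)) ∂(volume.withDensity (exponentialPDF r)) = _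
  have hslice : Measurable fun t => expMeasure s (Ioi (a * t)) :=
    measurable_measure_prodMk_left hmeas
  rw [lintegral_withDensity_eq_lintegral_mul _ (hpdf r) hslice]
  simp only [Pi.mul_apply, hpt]
  rw [lintegral_const_mul _ (hpdf _), lintegral_exponentialPDF_eq_one hrsa, mul_one]

lemma measure_mul_lt_and_mem_of_map_eq_prod {E Ω : Type*} [MeasurableSpace E]
    [MeasurableSpace Ω] {ν : Measure E} {P : Measure Ω} {X : Ω → E} {ξ₁ ξ₂ : Ω → ℝ}
    {r s : ℝ} (hr : 0 < r) (hs : 0 < s) (hX : Measurable X) (hξ₁ : Measurable ξ₁)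
    (hξ₂ : Measurable ξ₂)
    (hlaw : P.map (fun ω => (X ω, ξ₁ ω, ξ₂ ω)) = ν.prod ((expMeasure r).prod (expMeasure s)))
    {c : E → ℝ} (hc : Measurable c) (hc0 : ∀ x, 0 ≤ c x) {B : Set E} (hB : MeasurableSet B) :
    P {ω | c (X ω) * ξ₁ ω < ξ₂ ω ∧ X ω ∈ B}
      = ∫⁻ x in B, ENNReal.ofReal (r / (r + s * c x)) ∂ν := by
  have := isProbabilityMeasure_expMeasure hr
  have := isProbabilityMeasure_expMeasure hs
  set S := {p : E × ℝ × ℝ | c p.1 * p.2.1 < p.2.2 ∧ p.1 ∈ B}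
  have hS : MeasurableSet S :=
    (measurableSet_lt ((hc.comp measurable_fst).mul (measurable_fst.comp measurable_snd))
      (measurable_snd.comp measurable_snd)).inter (measurable_fst hB)
  change P ((fun ω => (X ω, ξ₁ ω, ξ₂ ω)) ⁻¹' S) = _
  rw [← Measure.map_apply (hX.prodMk (hξ₁.prodMk hξ₂)) hS, hlaw, Measure.prod_apply hS,
    ← lintegral_indicator hB]
  congr 1
  funext x
  by_cases hx : x ∈ B
  · rw [indicator_of_mem hx]
    simp only [S, preimage_ofPred_eq, hx, and_true]
    exact expMeasure_prod_setOf_mul_lt hr hs (hc0 x)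
  · simp [S, hx]

lemma withDensity_ofReal_apply {E : Type*} [MeasurableSpace E] {m : Measure E} {f : E → ℝ}
    (hf : Integrable f m) (hf0 : ∀ x, 0 ≤ f x) {s : Set E} (hs : MeasurableSet s) :
    m.withDensity (fun x => ENNReal.ofReal (f x)) s = ENNReal.ofReal (∫ x in s, f x ∂m) := by
  rw [withDensity_apply _ hs,
    ofReal_integral_eq_lintegral_ofReal hf.integrableOn (ae_of_all _ hf0)]

lemma map_cond_eq_of_measure_inter_preimage {Ω E : Type*} [MeasurableSpace Ω]
    [MeasurableSpace E] {P : Measure Ω} {X : Ω → E} {A : Set Ω} {ν : Measure E}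
    [IsProbabilityMeasure ν] {c : ENNReal} (hX : Measurable X) (hc0 : c ≠ 0) (hc : c ≠ ⊤)
    (h : ∀ C, MeasurableSet C → P (A ∩ X ⁻¹' C) = c * ν C) :
    Measure.map X P[|A] = ν := by
  have hPA : P A = c := by simpa using h univ .univ
  ext C hC
  rw [Measure.map_apply hX hC, cond_apply' (hX hC), h C hC, hPA, ← mul_assoc,
    ENNReal.inv_mul_cancel hc0 hc, one_mul]

lemma measure_accept_and_mem {E : Type*} [MeasurableSpace E] {m : Measure E}
    {π μ : E → ℝ} (hπmeas : Measurable π) (hμmeas : Measurable μ) (hπpos : ∀ x, 0 < π x)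
    (hμpos : ∀ x, 0 < μ x) {M : ℝ} (hM : 0 < M) (hdom : ∀ x, π x ≤ M * μ x)
    {Ω : Type*} [MeasurableSpace Ω] {P : Measure Ω} {X : Ω → E} (hX : Measurable X)
    {ξ₁ ξ₂ : Ω → ℝ} (hξ₁ : Measurable ξ₁) (hξ₂ : Measurable ξ₂)
    (hjoint : Measure.map (fun ω => (X ω, ξ₁ ω, ξ₂ ω)) P
      = (m.withDensity fun x => ENNReal.ofReal (μ x)).prod
          ((expMeasure 1).prod (expMeasure 1)))
    {B : Set E} (hB : MeasurableSet B) :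
    P {ω | (M * μ (X ω) / π (X ω) - 1) * ξ₁ ω < ξ₂ ω ∧ X ω ∈ B}
      = ENNReal.ofReal M⁻¹ * m.withDensity (fun x => ENNReal.ofReal (π x)) B := by
  have hc0 : ∀ x, 0 ≤ M * μ x / π x - 1 := fun x =>
    sub_nonneg.2 ((one_le_div (hπpos x)).2 (hdom x))
  have hc : Measurable fun x => M * μ x / π x - 1 := by fun_prop
  have hdensity : ∀ x, ENNReal.ofReal (μ x) * ENNReal.ofReal (1 / (1 + 1 * (M * μ x / π x - 1)))
      = ENNReal.ofReal M⁻¹ * ENNReal.ofReal (π x) := by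
    intro x
    have hμ := hμpos x
    have hπ := hπpos x
    rw [← ENNReal.ofReal_mul hμ.le, ← ENNReal.ofReal_mul (inv_nonneg.2 hM.le)]
    congr 1
    field_simp
    ring
  rw [measure_mul_lt_and_mem_of_map_eq_prod one_pos one_pos hX hξ₁ hξ₂ hjoint hc hc0 hB,
    restrict_withDensity hB, lintegral_withDensity_eq_lintegral_mul _ hμmeas.ennreal_ofReal
      (by fun_prop),
    withDensity_apply _ hB, ← lintegral_const_mul _ hπmeas.ennreal_ofReal]
  exact lintegral_congr fun x => hdensity x

theorem rejection_sampler_is_restore_cftp_general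
    {E : Type*} [MeasurableSpace E] (m : Measure E)
    (π μ : E → ℝ) (hπmeas : Measurable π) (hμmeas : Measurable μ)
    (hπpos : ∀ x, 0 < π x) (hμpos : ∀ x, 0 < μ x)
    (hπnorm : ∫ x, π x ∂m = 1)
    (M : ℝ) (hM : 0 < M) (hdom : ∀ x, π x ≤ M * μ x)
    {Ω : Type*} [MeasurableSpace Ω] (P : Measure Ω)
    (X : Ω → E) (hX : Measurable X)
    (ξ₁ ξ₂ : Ω → ℝ) (hξ₁ : Measurable ξ₁) (hξ₂ : Measurable ξ₂)
    (hjoint : Measure.map (fun ω => (X ω, ξ₁ ω, ξ₂ ω)) P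
      = (m.withDensity fun x => ENNReal.ofReal (μ x)).prod
          ((expMeasure 1).prod (expMeasure 1))) :
    (∀ B : Set E, MeasurableSet B →
      P {ω | (M * μ (X ω) / π (X ω) - 1) * ξ₁ ω < ξ₂ ω ∧ X ω ∈ B}
        = ENNReal.ofReal (M⁻¹ * ∫ x in B, π x ∂m)) ∧
    P {ω | (M * μ (X ω) / π (X ω) - 1) * ξ₁ ω < ξ₂ ω} = ENNReal.ofReal M⁻¹ ∧
    Measure.map X (P[|{ω | (M * μ (X ω) / π (X ω) - 1) * ξ₁ ω < ξ₂ ω}])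
      = m.withDensity fun x => ENNReal.ofReal (π x) := by
  have hπint : Integrable π m := .of_integral_ne_zero (by rw [hπnorm]; exact one_ne_zero)
  have hπ_apply := fun s (hs : MeasurableSet s) =>
    withDensity_ofReal_apply hπint (fun x => (hπpos x).le) hs
  have : IsProbabilityMeasure (m.withDensity fun x => ENNReal.ofReal (π x)) :=
    ⟨by rw [hπ_apply _ .univ, setIntegral_univ, hπnorm, ENNReal.ofReal_one]⟩
  have key := fun B (hB : MeasurableSet B) => measure_accept_and_mem hπmeas hμmeas
    hπpos hμpos hM hdom hX hξ₁ hξ₂ hjoint hB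
  refine ⟨fun B hB => ?_, by simpa using key _ .univ, ?_⟩
  · rw [key B hB, hπ_apply B hB, ENNReal.ofReal_mul (inv_nonneg.2 hM.le)]
  · exact map_cond_eq_of_measure_inter_preimage hX (by simpa using hM)
      ENNReal.ofReal_ne_top key

/-- **Probabilistic core of Theorem 4.5 (rejection sampling as Restore-CFTP).**
Let `π, μ` be probability densities w.r.t. `m` with `π, μ > 0` and `π ≤ M μ`.  Let `X` have
density `μ`, and let `ξ₁, ξ₂` be independent rate-1 exponential variables, independent of `X`
(expressed through the joint law of `(X, ξ₁, ξ₂)`).  Then for every measurable `B`,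
`P((Mμ(X)/π(X) - 1)ξ₁ < ξ₂ and X ∈ B) = M⁻¹ ∫_B π dm`; in particular the acceptance event
has probability `M⁻¹`, and conditionally on it `X` has density `π` w.r.t. `m`. -/
theorem rejection_sampler_is_restore_cftp
    {E : Type*} [MeasurableSpace E] (m : Measure E) [SigmaFinite m]
    (π μ : E → ℝ) (hπmeas : Measurable π) (hμmeas : Measurable μ)
    (hπpos : ∀ x, 0 < π x) (hμpos : ∀ x, 0 < μ x)
    (hπnorm : ∫ x, π x ∂m = 1) (hμnorm : ∫ x, μ x ∂m = 1)
    (M : ℝ) (hM : 0 < M) (hdom : ∀ x, π x ≤ M * μ x)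
    {Ω : Type*} [MeasurableSpace Ω] (P : Measure Ω) [IsProbabilityMeasure P]
    (X : Ω → E) (hX : Measurable X)
    (ξ₁ ξ₂ : Ω → ℝ) (hξ₁ : Measurable ξ₁) (hξ₂ : Measurable ξ₂)
    (hjoint : Measure.map (fun ω => (X ω, ξ₁ ω, ξ₂ ω)) P
      = (m.withDensity fun x => ENNReal.ofReal (μ x)).prod
          ((expMeasure 1).prod (expMeasure 1))) :
    (∀ B : Set E, MeasurableSet B →
      P {ω | (M * μ (X ω) / π (X ω) - 1) * ξ₁ ω < ξ₂ ω ∧ X ω ∈ B}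
        = ENNReal.ofReal (M⁻¹ * ∫ x in B, π x ∂m)) ∧
    P {ω | (M * μ (X ω) / π (X ω) - 1) * ξ₁ ω < ξ₂ ω} = ENNReal.ofReal M⁻¹ ∧
    Measure.map X (P[|{ω | (M * μ (X ω) / π (X ω) - 1) * ξ₁ ω < ξ₂ ω}])
      = m.withDensity fun x => ENNReal.ofReal (π x) :=
  rejection_sampler_is_restore_cftp_general m π μ hπmeas hμmeas hπpos hμpos hπnorm M hM hdom P X hX
    ξ₁ ξ₂ hξ₁ hξ₂ hjoint
end
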